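/- arXiv:2404.02301 — 8 statements merged into one kernel-verified Lean document; each statement's English description precedes it below -/
import Mathlib

section
/- Let H be a hypergraph on {1,…,s} with nonempty edge set E consisting of distinct edges, and let H* be its edge-removed hypergraph. Then the edge codes C_H and C_{H*} have the same length, the same dimension, and the same minimum distance. -/
/-!
On the torus, the substitution `t ↦ t⁻¹` followed by multiplication by `t₁ ⋯ tₛ` sends the
monomial `t^e` to `t^eᶜ`. As a map on `K^T` it permutes the coordinates and rescales each by a
nonzero scalar, so it is a linear automorphism preserving Hamming weight; it carries `C_H` onto
`C_{H*}`, which therefore has the same dimension and minimum distance.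
-/

open MvPolynomial

/-- The affine torus `T = (K*)^s`: points of `K^s` with all coordinates nonzero. -/
abbrev Torus (s : ℕ) (K : Type) [Zero K] := {P : Fin s → K // ∀ i, P i ≠ 0}

/-- The evaluation map `f ↦ (f(P))_{P ∈ T}` as a linear map. -/
noncomputable def evalTorus (s : ℕ) (K : Type) [Field K] :
    MvPolynomial (Fin s) K →ₗ[K] (Torus s K → K) :=
  LinearMap.pi fun P => (aeval (P.1 : Fin s → K)).toLinearMap

/-- The edge code of a hypergraph with edge set `E` on vertex set `{1,…,s}`:
the image under evaluation of the span of the squarefree monomials `∏_{j ∈ e} t_j`. -/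
noncomputable def edgeCode (s : ℕ) (K : Type) [Field K] (E : Set (Finset (Fin s))) :
    Submodule K (Torus s K → K) :=
  (Submodule.span K ((fun e : Finset (Fin s) => ∏ j ∈ e, X j) '' E)).map (evalTorus s K)

/-- Hamming weight of a word indexed by the torus. -/
noncomputable def wt {s : ℕ} {K : Type} [Field K] (c : Torus s K → K) : ℕ :=
  {P | c P ≠ 0}.ncard

/-- Minimum distance of a linear code: the least Hamming weight of a nonzero codeword. -/
noncomputable def minDist {s : ℕ} {K : Type} [Field K] (C : Submodule K (Torus s K → K)) : ℕ :=
  sInf {w : ℕ | ∃ c ∈ C, c ≠ 0 ∧ wt c = w}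

section MonomialEquiv

variable {ι K : Type*} [CommRing K]

def monomialEquiv (σ : Equiv.Perm ι) (u : ι → Kˣ) : (ι → K) ≃ₗ[K] (ι → K) where
  toFun c x := u x * c (σ x)
  invFun c x := ↑(u (σ.symm x))⁻¹ * c (σ.symm x)
  map_add' c d := funext fun x => mul_add _ _ _
  map_smul' a c := funext fun x => by simp only [Pi.smul_apply, smul_eq_mul, RingHom.id_apply]; ring
  left_inv c := funext fun x => by simp
  right_inv c := funext fun x => by simp

lemma monomialEquiv_apply (σ : Equiv.Perm ι) (u : ι → Kˣ) (c : ι → K) (x : ι) :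
    monomialEquiv σ u c x = u x * c (σ x) := rfl

lemma ncard_support_monomialEquiv (σ : Equiv.Perm ι) (u : ι → Kˣ) (c : ι → K) :
    {x | monomialEquiv σ u c x ≠ 0}.ncard = {x | c x ≠ 0}.ncard := by
  have : {x | monomialEquiv σ u c x ≠ 0} = σ ⁻¹' {x | c x ≠ 0} := by
    ext x; simp [monomialEquiv_apply]
  rw [this, ← Equiv.image_symm_eq_preimage, Set.ncard_image_of_injective _ σ.symm.injective]

end MonomialEquiv

section

variable {s : ℕ} {K : Type} [Field K]

lemma minDist_map_of_wt_eq (L : (Torus s K → K) ≃ₗ[K] (Torus s K → K))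
    (hL : ∀ c, wt (L c) = wt c) (C : Submodule K (Torus s K → K)) :
    minDist (C.map (L : (Torus s K → K) →ₗ[K] (Torus s K → K))) = minDist C := by
  unfold minDist
  congr 1
  ext w
  constructor
  · rintro ⟨_, ⟨c, hc, rfl⟩, hne, rfl⟩
    exact ⟨c, hc, fun h => hne (by simp [h]), (hL c).symm⟩
  · rintro ⟨c, hc, hne, rfl⟩
    exact ⟨L c, Submodule.mem_map_of_mem hc, L.map_ne_zero_iff.2 hne, hL c⟩

def torusInv : Equiv.Perm (Torus s K) :=
  Function.Involutive.toPerm (fun P => ⟨fun i => (P.1 i)⁻¹, fun i => inv_ne_zero (P.2 i)⟩)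
    fun _ => Subtype.ext (funext fun _ => inv_inv _)

lemma torusInv_apply (P : Torus s K) (i : Fin s) : (torusInv P).1 i = (P.1 i)⁻¹ := rfl

def torusProd (P : Torus s K) : Kˣ :=
  Units.mk0 (∏ i, P.1 i) (Finset.prod_ne_zero_iff.2 fun i _ => P.2 i)

variable (s K) in
noncomputable def complementEquiv : (Torus s K → K) ≃ₗ[K] (Torus s K → K) :=
  monomialEquiv torusInv torusProd

lemma complementEquiv_evalTorus_prod_X (e : Finset (Fin s)) :
    complementEquiv s K (evalTorus s K (∏ j ∈ e, X j)) = evalTorus s K (∏ j ∈ eᶜ, X j) := by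
  funext P
  have he : (∏ j ∈ e, P.1 j) ≠ 0 := Finset.prod_ne_zero_iff.2 fun i _ => P.2 i
  simp only [complementEquiv, monomialEquiv_apply, evalTorus, LinearMap.pi_apply,
    AlgHom.toLinearMap_apply, map_prod, aeval_X, torusProd, Units.val_mk0, torusInv_apply, Finset.prod_inv_distrib,
    ← Finset.prod_mul_prod_compl e]
  field_simp

lemma edgeCode_map_complementEquiv (E : Set (Finset (Fin s))) :
    (edgeCode s K E).map (complementEquiv s K : (Torus s K → K) →ₗ[K] (Torus s K → K))
      = edgeCode s K (compl '' E) := by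
  simp only [edgeCode, Submodule.map_span, Set.image_image]
  congr 1
  exact Set.image_congr fun e _ => complementEquiv_evalTorus_prod_X e

end

theorem edgeCode_edgeRemoved_same_parameters_general
    (s : ℕ) (K : Type) [Field K]
    (E : Finset (Finset (Fin s))) :
    -- same length: both codes live in `K^T`, of cardinality `(q-1)^s`
    Nat.card (Torus s K) = Nat.card (Torus s K) ∧
    -- same dimension
    Module.finrank K (edgeCode s K (E : Set (Finset (Fin s))))
      = Module.finrank K (edgeCode s K ((E.image fun e => eᶜ) : Set (Finset (Fin s)))) ∧
    -- same minimum distance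
    minDist (edgeCode s K (E : Set (Finset (Fin s))))
      = minDist (edgeCode s K ((E.image fun e => eᶜ) : Set (Finset (Fin s)))) := by
  rw [Finset.coe_image, ← edgeCode_map_complementEquiv]
  exact ⟨rfl, (LinearEquiv.finrank_map_eq _ _).symm,
    (minDist_map_of_wt_eq _ (ncard_support_monomialEquiv _ _) _).symm⟩

/-- the edge code of a hypergraph `H` and the edge code of its
edge-removed hypergraph `H*` (whose edges are the complements of the edges of `H`)
have the same length, the same dimension and the same minimum distance. -/
theorem edgeCode_edgeRemoved_same_parameters
    (q s : ℕ) (K : Type) [Field K] [Fintype K] (hK : Fintype.card K = q)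
    (E : Finset (Finset (Fin s))) (hE : E.Nonempty) :
    -- same length: both codes live in `K^T`, of cardinality `(q-1)^s`
    Nat.card (Torus s K) = Nat.card (Torus s K) ∧
    -- same dimension
    Module.finrank K (edgeCode s K (E : Set (Finset (Fin s))))
      = Module.finrank K (edgeCode s K ((E.image fun e => eᶜ) : Set (Finset (Fin s)))) ∧
    -- same minimum distance
    minDist (edgeCode s K (E : Set (Finset (Fin s))))
      = minDist (edgeCode s K ((E.image fun e => eᶜ) : Set (Finset (Fin s)))) :=
  edgeCode_edgeRemoved_same_parameters_general s K E
end

section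
/- Let d ≥ 1 and let h_1,…,h_d ∈ S = K[t_1,…,t_s] be polynomials such that each h_i is either of the form t_k − t_l for two distinct indices k, l, or of the form t_k − 1, and such that no variable occurs in two different h_i. Let f = h_1 ⋯ h_d. Then the number of zeros of f in the affine torus is |V_T(f)| = (q−1)^s − (q−2)^d (q−1)^{s−d}. -/
open MvPolynomial

/-!
Write each factor as `h_i = t_{k_i} - g_i` with `g_i = t_{l_i}` or `g_i = 1` (encoded as
`X (k i) - (m i).elim 1 X` with `m i : Option (Fin s)`). Disjointness makes the leading
variables `t_{k_i}` pairwise distinct and distinct from every `t_{l_i}`. On the torus, viewed as the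
group `(K*)^s`, the substitution `t_{k_i} ↦ t_{k_i} / g_i` is therefore a bijection, and it turns the
non-zeros of `f`, i.e. the points with `t_{k_i} ≠ g_i` for all `i`, into the points with
`t_{k_i} ≠ 1` for all `i`. There are `(q-2)^d (q-1)^{s-d}` of those.
-/

open Function Finset

section Counting

variable {κ ι G : Type*} [Fintype κ] [Fintype ι]

theorem card_forall_apply_ne_one [One G] [Fintype G] {k : κ → ι} (hk : Injective k) :
    Nat.card {v : ι → G // ∀ i, v (k i) ≠ 1} =
      (Nat.card G - 1) ^ Fintype.card κ * Nat.card G ^ (Fintype.card ι - Fintype.card κ) := by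
  classical
  set L := univ.map ⟨k, hk⟩
  have hpi : ({v | ∀ i, v (k i) ≠ 1} : Finset (ι → G)) =
      Fintype.piFinset fun j => if j ∈ L then univ.erase 1 else univ := by
    ext v
    simp only [mem_filter, mem_univ, true_and, Fintype.mem_piFinset]
    constructor
    · intro hv j
      split_ifs with hj
      · obtain ⟨i, -, rfl⟩ := mem_map.mp hj
        simpa using hv i
      · exact mem_univ _
    · intro hv i
      simpa [L] using hv (k i)
  rw [Nat.card_eq_fintype_card, Fintype.card_subtype, hpi, Fintype.card_piFinset]
  simp_rw [apply_ite Finset.card, prod_ite, prod_const, filter_not, filter_mem_eq_inter,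
    univ_inter, ← compl_eq_univ_sdiff]
  rw [card_compl, card_map, card_erase_of_mem (mem_univ 1), card_univ, card_univ,
    Nat.card_eq_fintype_card]

variable [Group G]

-- `p j` is the partner coordinate of `j`; since partners have no partners themselves,
-- multiplying back by the partner coordinate inverts the map.
def shearEquiv (p : ι → Option ι) (hp : ∀ j l, p j = some l → p l = none) :
    (ι → G) ≃ (ι → G) where
  toFun u j := u j * ((p j).elim 1 u)⁻¹
  invFun u j := u j * (p j).elim 1 u
  left_inv u := by
    funext j
    dsimp only
    cases hpj : p j with
    | none => simp
    | some l => simp [hp j l hpj]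
  right_inv u := by
    funext j
    dsimp only
    cases hpj : p j with
    | none => simp
    | some l => simp [hp j l hpj]

theorem card_forall_ne_partner [Finite G] {k : κ → ι} (hk : Injective k) (m : κ → Option ι)
    (hm : ∀ i i' l, m i = some l → k i' ≠ l) :
    Nat.card {u : ι → G // ∀ i, u (k i) ≠ (m i).elim 1 u} =
      (Nat.card G - 1) ^ Fintype.card κ * Nat.card G ^ (Fintype.card ι - Fintype.card κ) := by
  have := Fintype.ofFinite G
  rw [← card_forall_apply_ne_one hk]
  set p : ι → Option ι := extend k m fun _ => none
  have hpk : ∀ i, p (k i) = m i := hk.extend_apply m _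
  have hp : ∀ j l, p j = some l → p l = none := by
    intro j l hjl
    refine extend_apply' _ _ _ ?_
    rintro ⟨i', hi'⟩
    by_cases hj : ∃ i, k i = j
    · obtain ⟨i, rfl⟩ := hj
      exact hm i i' l (hpk i ▸ hjl) hi'
    · simp [p, extend_apply' _ _ _ hj] at hjl
  exact Nat.card_congr <| (shearEquiv p hp).subtypeEquiv fun u => by
    simp [shearEquiv, hpk, mul_inv_eq_one]

end Counting

section Binomials

variable {σ R : Type*} [CommRing R]

theorem mem_vars_X_sub_elim [Nontrivial R] {k : σ} {m : Option σ} (hkm : ∀ l, m = some l → k ≠ l)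
    {j : σ} : j ∈ (X k - m.elim 1 X : MvPolynomial σ R).vars ↔ j = k ∨ m = some j := by
  classical
  cases m with
  | none => simp
  | some l =>
    have hkl : k ≠ l := hkm l rfl
    rw [Option.elim_some, vars_sub_of_disjoint _ (by simpa [vars_X] using hkl)]
    simp [vars_X, eq_comm]

theorem eval_X_sub_elim_eq_zero_iff (u : σ → Rˣ) (k : σ) (m : Option σ) :
    eval (fun j => (u j : R)) (X k - m.elim 1 X) = 0 ↔ u k = m.elim 1 u := by
  cases m with
  | none => simp [sub_eq_zero]
  | some l => simp [sub_eq_zero, Units.val_inj]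

theorem exists_eq_X_sub_elim_of_disjoint_vars [Nontrivial R] {κ : Type*} (h : κ → MvPolynomial σ R)
    (hform : ∀ i, (∃ k l : σ, k ≠ l ∧ h i = X k - X l) ∨ (∃ k : σ, h i = X k - 1))
    (hdisj : ∀ i j, i ≠ j → Disjoint (h i).vars (h j).vars) :
    ∃ (k : κ → σ) (m : κ → Option σ), Injective k ∧ (∀ i i' l, m i = some l → k i' ≠ l) ∧
      ∀ i, h i = X (k i) - (m i).elim 1 X := by
  have hshape : ∀ i, ∃ (k : σ) (m : Option σ), (∀ l, m = some l → k ≠ l) ∧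
      h i = X k - m.elim 1 X := by
    intro i
    rcases hform i with ⟨k, l, hkl, hi⟩ | ⟨k, hi⟩
    · exact ⟨k, some l, by simpa using hkl, hi⟩
    · exact ⟨k, none, by simp, hi⟩
  choose k m hkm hh using hshape
  have hvars : ∀ i j, j ∈ (h i).vars ↔ j = k i ∨ m i = some j := fun i j => by
    rw [hh i]
    exact mem_vars_X_sub_elim (hkm i)
  refine ⟨k, m, fun i i' hii' => ?_, fun i i' l hl hkl => ?_, hh⟩
  · by_contra hne
    exact disjoint_left.mp (hdisj i i' hne) ((hvars i _).2 (.inl rfl)) ((hvars i' _).2 (.inl hii'))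
  · rcases eq_or_ne i' i with rfl | hne
    · exact hkm i' l hl hkl
    · exact disjoint_left.mp (hdisj i' i hne) ((hvars i' l).2 (.inl hkl.symm))
        ((hvars i l).2 (.inr hl))

end Binomials

def torusEquivUnits (s : ℕ) (K : Type) [GroupWithZero K] : Torus s K ≃ (Fin s → Kˣ) where
  toFun P j := Units.mk0 (P.1 j) (P.2 j)
  invFun u := ⟨fun j => u j, fun j => (u j).ne_zero⟩
  left_inv _ := rfl
  right_inv _ := funext fun _ => Units.ext rfl

theorem card_zeros_of_product_of_disjoint_binomials_general
    (q s d : ℕ) (K : Type) [Field K] [Fintype K]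
    (hK : Fintype.card K = q)
    (h : Fin d → MvPolynomial (Fin s) K)
    (hform : ∀ i, (∃ k l : Fin s, k ≠ l ∧ h i = X k - X l) ∨ (∃ k : Fin s, h i = X k - 1))
    (hdisj : ∀ i j, i ≠ j → Disjoint (h i).vars (h j).vars) :
    {P : Torus s K | eval P.1 (∏ i, h i) = 0}.ncard
      = (q - 1) ^ s - (q - 2) ^ d * (q - 1) ^ (s - d) := by
  obtain ⟨k, m, hk, hm, hh⟩ := exists_eq_X_sub_elim_of_disjoint_vars h hform hdisj
  have hunits : Nat.card Kˣ = q - 1 := by rw [Nat.card_units, Nat.card_eq_fintype_card, hK]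
  have htorus : Nat.card (Torus s K) = (q - 1) ^ s := by
    rw [Nat.card_congr (torusEquivUnits s K), Nat.card_fun, hunits, Nat.card_fin]
  have hnonzero : {P : Torus s K | eval P.1 (∏ i, h i) = 0}ᶜ.ncard =
      (q - 2) ^ d * (q - 1) ^ (s - d) := by
    have e : ↥({P : Torus s K | eval P.1 (∏ i, h i) = 0}ᶜ) ≃
        {u : Fin s → Kˣ // ∀ i, u (k i) ≠ (m i).elim 1 u} :=
      (torusEquivUnits s K).subtypeEquiv fun P => by
        have hP : P.1 = fun j => (torusEquivUnits s K P j : K) := rfl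
        simp only [Set.mem_compl_iff, Set.mem_ofPred_eq, map_prod, prod_eq_zero_iff, mem_univ,
          true_and, not_exists, hh, hP, eval_X_sub_elim_eq_zero_iff]
    rw [← Nat.card_coe_set_eq, Nat.card_congr e, card_forall_ne_partner hk m hm, hunits,
      Fintype.card_fin, Fintype.card_fin, Nat.sub_sub]
  have hsum := Set.ncard_add_ncard_compl {P : Torus s K | eval P.1 (∏ i, h i) = 0}
  omega

/-- if `f = h_1 ⋯ h_d` where each `h_i` is of the form `t_k - t_l`
(`k ≠ l`) or `t_k - 1`, and no variable occurs in two different `h_i`, then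
`|V_T(f)| = (q-1)^s - (q-2)^d (q-1)^{s-d}`. -/
theorem card_zeros_of_product_of_disjoint_binomials
    (q s d : ℕ) (hd : 1 ≤ d) (K : Type) [Field K] [Fintype K]
    (hK : Fintype.card K = q)
    (h : Fin d → MvPolynomial (Fin s) K)
    (hform : ∀ i, (∃ k l : Fin s, k ≠ l ∧ h i = X k - X l) ∨ (∃ k : Fin s, h i = X k - 1))
    (hdisj : ∀ i j, i ≠ j → Disjoint (h i).vars (h j).vars) :
    {P : Torus s K | eval P.1 (∏ i, h i) = 0}.ncard
      = (q - 1) ^ s - (q - 2) ^ d * (q - 1) ^ (s - d) :=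
  card_zeros_of_product_of_disjoint_binomials_general q s d K hK h hform hdisj
end

section
/- Let q ≥ 3, let d ≥ 1 with 2d ≤ s, and let C be a d-uniform hypergraph on {1,…,s} (every edge of C has exactly d elements) that contains the clutter of partite paths 𝔠_{d−1}(J_{d×2}). Then the minimum distance of the edge code of C is δ(C_C) = (q−2)^d (q−1)^{s−d}. -/
open MvPolynomial

/-- A hypergraph with edge set `E` on `{1,…,s}` contains the clutter of partite paths
`𝔠_{m-1}(J_{m×2})`: there are `2m` distinct vertices `i_1,…,i_{2m}` such that for every
`σ : {1,…,m} → {0,1}`, the `m`-set `{i_{2r-1+σ(r)} : r = 1,…,m}` is an edge. -/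
def ContainsPartitePathClutter (s m : ℕ) (E : Finset (Finset (Fin s))) : Prop :=
  ∃ ι : Fin (2 * m) → Fin s, Function.Injective ι ∧
    ∀ σ : Fin m → Fin 2,
      (Finset.image
        (fun r : Fin m =>
          ι ⟨2 * (r : ℕ) + ((σ r : ℕ)),
            by have h1 := r.isLt; have h2 := (σ r).isLt; omega⟩)
        Finset.univ) ∈ E

/-!
A nonzero polynomial `f` that is multilinear in `n` variables is nonzero on at least
`(q - 2) ^ deg f * (q - 1) ^ (n - deg f)` points of the torus. Induct on `n`, writing
`f = h + t₀ g` with `h, g` free of `t₀`: the slice `t₀ = a` of the torus carries `h + a g`.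
If no slice polynomial vanishes, each of the `q - 1` slices contributes the bound for `n - 1`
variables; if `h + a₀ g = 0`, then `f = (t₀ - a₀) g` with `deg g < deg f`, and each of the
remaining `q - 2` slices contributes the bound for `g`. Edge polynomials of a `d`-uniform
hypergraph are multilinear of degree `d`.

The bound is attained: expanding `∏ r (t_{i_{2r-1}} - t_{i_{2r}})` gives a combination of the
edges of the partite-path clutter, and this polynomial vanishes unless every ratio
`t_{i_{2r}} / t_{i_{2r-1}}` lies outside `{0, 1}`.
-/

lemma pow_mul_pow_sub_le_pow_mul_pow_sub {a b i j N : ℕ} (hab : a ≤ b) (hij : i ≤ j)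
    (hjN : j ≤ N) : a ^ j * b ^ (N - j) ≤ a ^ i * b ^ (N - i) := by
  obtain ⟨k, rfl⟩ := Nat.exists_eq_add_of_le hij
  calc a ^ (i + k) * b ^ (N - (i + k)) = a ^ i * (a ^ k * b ^ (N - (i + k))) := by ring
    _ ≤ a ^ i * (b ^ k * b ^ (N - (i + k))) := by gcongr
    _ = a ^ i * b ^ (N - i) := by rw [← pow_add]; congr 2; omega

namespace MvPolynomial

variable {R : Type*} [CommRing R]

lemma totalDegree_le_of_mem_restrictDegree {σ : Type*} [Fintype σ] {p : MvPolynomial σ R}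
    {k : ℕ} (hp : p ∈ restrictDegree σ R k) : p.totalDegree ≤ Fintype.card σ * k :=
  Finset.sup_le fun m hm => calc
    m.sum (fun _ e => e) = ∑ i, m i := Finsupp.sum_fintype _ _ fun _ => rfl
    _ ≤ ∑ _i : σ, k := Finset.sum_le_sum fun i _ => (mem_restrictDegree _ _ _).1 hp m hm i
    _ = Fintype.card σ * k := by simp

lemma prod_X_mem_restrictDegree_one {σ : Type*} (e : Finset σ) :
    ∏ j ∈ e, X j ∈ restrictDegree σ R 1 := by
  classical
  nontriviality R
  rw [mem_restrictDegree]
  intro m hm i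
  refine degreeOf_le_iff.1 ((degreeOf_prod_le i e X).trans ?_) m hm
  simp only [degreeOf_X, Finset.sum_ite_eq]
  split_ifs <;> simp

lemma span_prod_X_le {σ : Type*} {E : Set (Finset σ)} {d : ℕ} (hE : ∀ e ∈ E, e.card ≤ d) :
    Submodule.span R ((fun e => ∏ j ∈ e, X j) '' E) ≤
      restrictDegree σ R 1 ⊓ restrictTotalDegree σ R d := by
  nontriviality R
  refine Submodule.span_le.2 <| Set.image_subset_iff.2 fun e he =>
    ⟨prod_X_mem_restrictDegree_one e, ?_⟩
  rw [SetLike.mem_coe, mem_restrictTotalDegree]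
  exact (totalDegree_finsetProd e X).trans (by simpa [totalDegree_X] using hE e he)

lemma prod_X_sub_X_mem_span {σ : Type*} {d : ℕ} (v : Fin d → Fin 2 → σ) :
    ∏ r, (X (v r 0) - X (v r 1) : MvPolynomial σ R) ∈
      Submodule.span R (Set.range fun τ : Fin d → Fin 2 => ∏ r, X (v r (τ r))) := by
  have hsum (r : Fin d) : (X (v r 0) - X (v r 1) : MvPolynomial σ R) =
      ∑ k : Fin 2, C ((-1) ^ (k : ℕ)) * X (v r k) := by
    simp [Fin.sum_univ_two, sub_eq_add_neg]
  simp_rw [hsum, Fintype.prod_sum, Finset.prod_mul_distrib, ← map_prod, ← smul_eq_C_mul]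
  exact Submodule.sum_mem _ fun τ _ => Submodule.smul_mem _ _ (Submodule.subset_span ⟨τ, rfl⟩)

variable {n k : ℕ} {f : MvPolynomial (Fin (n + 1)) R}

lemma coeff_finSuccEquiv_mem_restrictDegree (hf : f ∈ restrictDegree (Fin (n + 1)) R k)
    (i : ℕ) : (finSuccEquiv R n f).coeff i ∈ restrictDegree (Fin n) R k := by
  rw [mem_restrictDegree] at hf ⊢
  intro m hm j
  simpa using hf _ (mem_support_coeff_finSuccEquiv.1 hm) j.succ

lemma natDegree_finSuccEquiv_le (hf : f ∈ restrictDegree (Fin (n + 1)) R k) :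
    (finSuccEquiv R n f).natDegree ≤ k := by
  rw [natDegree_finSuccEquiv]
  exact degreeOf_le_iff.2 fun m hm => (mem_restrictDegree _ _ _).1 hf m hm 0

lemma eval_cons_of_mem_restrictDegree_one (hf : f ∈ restrictDegree (Fin (n + 1)) R 1)
    (a : R) (y : Fin n → R) :
    eval (Fin.cons a y) f =
      eval y ((finSuccEquiv R n f).coeff 0 + a • (finSuccEquiv R n f).coeff 1) := by
  rw [eval_eq_eval_mv_eval']
  conv_lhs => rw [Polynomial.eq_X_add_C_of_natDegree_le_one (natDegree_finSuccEquiv_le hf)]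
  simp only [Polynomial.map_add, Polynomial.map_mul, Polynomial.map_C, Polynomial.map_X,
    Polynomial.eval_add, Polynomial.eval_mul, Polynomial.eval_C, Polynomial.eval_X, map_add,
    smul_eval]
  ring

lemma totalDegree_coeff_finSuccEquiv_le (f : MvPolynomial (Fin (n + 1)) R) (i : ℕ) :
    ((finSuccEquiv R n f).coeff i).totalDegree ≤ f.totalDegree := by
  by_cases hi : (finSuccEquiv R n f).coeff i = 0
  · simp [hi]
  · exact (Nat.le_add_right _ _).trans (totalDegree_coeff_finSuccEquiv_add_le f i hi)

lemma totalDegree_coeff_zero_add_smul_coeff_one_le (f : MvPolynomial (Fin (n + 1)) R)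
    (a : R) :
    ((finSuccEquiv R n f).coeff 0 + a • (finSuccEquiv R n f).coeff 1).totalDegree ≤
      f.totalDegree :=
  (totalDegree_add _ _).trans (max_le (totalDegree_coeff_finSuccEquiv_le f 0)
    ((totalDegree_smul_le _ _).trans (totalDegree_coeff_finSuccEquiv_le f 1)))

lemma eq_zero_of_coeff_finSuccEquiv_eq_zero (hf : f ∈ restrictDegree (Fin (n + 1)) R 1)
    (h₀ : (finSuccEquiv R n f).coeff 0 = 0) (h₁ : (finSuccEquiv R n f).coeff 1 = 0) : f = 0 := by
  rw [← map_eq_zero_iff _ (finSuccEquiv R n).injective,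
    Polynomial.eq_X_add_C_of_natDegree_le_one (natDegree_finSuccEquiv_le hf), h₀, h₁]
  simp

end MvPolynomial

def Torus.consEquiv (s : ℕ) (K : Type) [Zero K] :
    {a : K // a ≠ 0} × Torus s K ≃ Torus (s + 1) K where
  toFun x := ⟨Fin.cons x.1.1 x.2.1, Fin.cases x.1.2 x.2.2⟩
  invFun P := (⟨P.1 0, P.2 0⟩, ⟨Fin.tail P.1, fun i => P.2 i.succ⟩)
  left_inv x := by simp
  right_inv P := Subtype.ext (Fin.cons_self_tail P.1)

section Weight

variable {s : ℕ} {K : Type} [Field K]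

lemma wt_pos [Finite K] {c : Torus s K → K} : 0 < wt c ↔ c ≠ 0 := by
  rw [wt, Set.ncard_pos, Set.nonempty_def, Ne, funext_iff]
  simp

lemma wt_smul {a : K} (ha : a ≠ 0) (c : Torus s K → K) : wt (a • c) = wt c := by
  simp [wt, ha]

lemma wt_eq_sum_wt_cons [Fintype K] [DecidableEq K] (c : Torus (s + 1) K → K) :
    wt c = ∑ a : {a : K // a ≠ 0}, wt fun Q => c (Torus.consEquiv s K (a, Q)) := by
  simp only [wt, ← Nat.card_coe_set_eq, ← Nat.card_sigma]
  exact Nat.card_congr (((Torus.consEquiv s K).symm.subtypeEquiv fun P => by simp).trans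
    (Equiv.subtypeProdEquivSigmaSubtype fun a Q => c (Torus.consEquiv s K (a, Q)) ≠ 0))

lemma minDist_eq_of_forall_le_wt {C : Submodule K (Torus s K → K)} {w : ℕ}
    (hle : ∀ c ∈ C, c ≠ 0 → w ≤ wt c) {c₀ : Torus s K → K} (hc₀ : c₀ ∈ C) (hc₀0 : c₀ ≠ 0)
    (hwt : wt c₀ ≤ w) : minDist C = w := by
  unfold minDist
  refine le_antisymm ((Nat.sInf_le ?_).trans hwt) (le_csInf ⟨_, c₀, hc₀, hc₀0, rfl⟩ ?_)
  · exact ⟨c₀, hc₀, hc₀0, rfl⟩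
  · rintro _ ⟨c, hc, hc0, rfl⟩
    exact hle c hc hc0

lemma evalTorus_apply (f : MvPolynomial (Fin s) K) (P : Torus s K) :
    evalTorus s K f P = eval P.1 f := by
  simp [evalTorus, aeval_def]

end Weight

section FiniteField

variable {K : Type} [Field K] [Fintype K] [DecidableEq K] {n : ℕ}

lemma card_subtype_ne_zero : Fintype.card {a : K // a ≠ 0} = Fintype.card K - 1 := by
  simp [Fintype.card_subtype_compl]

lemma card_subtype_ne_zero_and_ne_one :
    Fintype.card {z : K // z ≠ 0 ∧ z ≠ 1} = Fintype.card K - 2 := by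
  rw [Fintype.card_congr (Equiv.subtypeEquivRight (q := fun z => z ∉ ({0, 1} : Finset K))
      (by simp)), Fintype.card_subtype_compl, Fintype.card_coe, Finset.card_pair zero_ne_one]

lemma wt_evalTorus_succ {f : MvPolynomial (Fin (n + 1)) K}
    (hf : f ∈ restrictDegree (Fin (n + 1)) K 1) :
    wt (evalTorus (n + 1) K f) = ∑ a : {a : K // a ≠ 0},
      wt (evalTorus n K ((finSuccEquiv K n f).coeff 0 + a.1 • (finSuccEquiv K n f).coeff 1)) := by
  rw [wt_eq_sum_wt_cons]
  congr! 2 with a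
  funext Q
  simp only [evalTorus_apply, Torus.consEquiv, Equiv.coe_fn_mk,
    eval_cons_of_mem_restrictDegree_one hf]

lemma card_sub_two_mul_wt_le_sum_wt {h g : MvPolynomial (Fin n) K} (a₀ : {a : K // a ≠ 0})
    (hroot : h + a₀.1 • g = 0) :
    (Fintype.card K - 2) * wt (evalTorus n K g) ≤
      ∑ a : {a : K // a ≠ 0}, wt (evalTorus n K (h + a.1 • g)) := by
  have hwt (a : {a : K // a ≠ 0}) (ha : a ≠ a₀) :
      wt (evalTorus n K (h + a.1 • g)) = wt (evalTorus n K g) := by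
    rw [show h + a.1 • g = (a.1 - a₀.1) • g by
        rw [eq_neg_of_add_eq_zero_left hroot, sub_smul]; abel,
      map_smul, wt_smul (sub_ne_zero.2 fun h => ha (Subtype.ext h))]
  calc (Fintype.card K - 2) * wt (evalTorus n K g)
      = ∑ a ∈ Finset.univ.erase a₀, wt (evalTorus n K (h + a.1 • g)) := by
        rw [Finset.sum_congr rfl fun a ha => hwt a (Finset.ne_of_mem_erase ha), Finset.sum_const,
          Finset.card_erase_of_mem (Finset.mem_univ _), Finset.card_univ, card_subtype_ne_zero,
          smul_eq_mul, Nat.sub_sub]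
    _ ≤ _ := Finset.sum_le_univ_sum_of_nonneg fun _ => Nat.zero_le _

lemma le_wt_evalTorus_succ_of_root {f : MvPolynomial (Fin (n + 1)) K}
    (hf : f ∈ restrictDegree (Fin (n + 1)) K 1) (hf0 : f ≠ 0)
    (ih : ∀ g ∈ restrictDegree (Fin n) K 1, g ≠ 0 →
      (Fintype.card K - 2) ^ g.totalDegree * (Fintype.card K - 1) ^ (n - g.totalDegree) ≤
        wt (evalTorus n K g))
    (a₀ : {a : K // a ≠ 0})
    (hroot : (finSuccEquiv K n f).coeff 0 + a₀.1 • (finSuccEquiv K n f).coeff 1 = 0) :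
    (Fintype.card K - 2) ^ f.totalDegree * (Fintype.card K - 1) ^ (n + 1 - f.totalDegree) ≤
      wt (evalTorus (n + 1) K f) := by
  set q := Fintype.card K
  set g := (finSuccEquiv K n f).coeff 1
  have hg : g ≠ 0 := fun hg =>
    hf0 (eq_zero_of_coeff_finSuccEquiv_eq_zero hf (by simpa [hg] using hroot) hg)
  have hdeg : f.totalDegree ≤ n + 1 := by simpa using totalDegree_le_of_mem_restrictDegree hf
  rw [wt_evalTorus_succ hf]
  calc (q - 2) ^ f.totalDegree * (q - 1) ^ (n + 1 - f.totalDegree)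
      ≤ (q - 2) ^ (g.totalDegree + 1) * (q - 1) ^ (n + 1 - (g.totalDegree + 1)) :=
        pow_mul_pow_sub_le_pow_mul_pow_sub (by omega)
          (totalDegree_coeff_finSuccEquiv_add_le f 1 hg) hdeg
    _ = (q - 2) * ((q - 2) ^ g.totalDegree * (q - 1) ^ (n - g.totalDegree)) := by
        rw [Nat.add_sub_add_right, pow_succ]; ring
    _ ≤ (q - 2) * wt (evalTorus n K g) :=
        Nat.mul_le_mul_left _ (ih g (coeff_finSuccEquiv_mem_restrictDegree hf 1) hg)
    _ ≤ _ := card_sub_two_mul_wt_le_sum_wt a₀ hroot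

lemma le_wt_evalTorus_succ_of_forall_ne_zero {f : MvPolynomial (Fin (n + 1)) K}
    (hf : f ∈ restrictDegree (Fin (n + 1)) K 1)
    (ih : ∀ g ∈ restrictDegree (Fin n) K 1, g ≠ 0 →
      (Fintype.card K - 2) ^ g.totalDegree * (Fintype.card K - 1) ^ (n - g.totalDegree) ≤
        wt (evalTorus n K g))
    (hne : ∀ a : {a : K // a ≠ 0},
      (finSuccEquiv K n f).coeff 0 + a.1 • (finSuccEquiv K n f).coeff 1 ≠ 0) :
    (Fintype.card K - 2) ^ f.totalDegree * (Fintype.card K - 1) ^ (n + 1 - f.totalDegree) ≤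
      wt (evalTorus (n + 1) K f) := by
  set q := Fintype.card K
  set m := min f.totalDegree n
  have hq : q - 2 ≤ q - 1 := by omega
  have hslice (a : {a : K // a ≠ 0}) : (q - 2) ^ m * (q - 1) ^ (n - m) ≤
      wt (evalTorus n K ((finSuccEquiv K n f).coeff 0 + a.1 • (finSuccEquiv K n f).coeff 1)) := by
    have hmem := add_mem (coeff_finSuccEquiv_mem_restrictDegree hf 0)
      (Submodule.smul_mem _ a.1 (coeff_finSuccEquiv_mem_restrictDegree hf 1))
    have hdeg := le_min (totalDegree_coeff_zero_add_smul_coeff_one_le f a.1)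
      (by simpa using totalDegree_le_of_mem_restrictDegree hmem)
    exact (pow_mul_pow_sub_le_pow_mul_pow_sub hq hdeg (min_le_right _ _)).trans
      (ih _ hmem (hne a))
  rw [wt_evalTorus_succ hf]
  calc (q - 2) ^ f.totalDegree * (q - 1) ^ (n + 1 - f.totalDegree)
      ≤ (q - 2) ^ m * (q - 1) ^ (n + 1 - m) :=
        pow_mul_pow_sub_le_pow_mul_pow_sub hq (min_le_left _ _)
          (by simpa using totalDegree_le_of_mem_restrictDegree hf)
    _ = (q - 1) * ((q - 2) ^ m * (q - 1) ^ (n - m)) := by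
        rw [Nat.sub_add_comm (min_le_right _ _), pow_succ]; ring
    _ ≤ _ := by
        simpa [card_subtype_ne_zero] using
          Finset.card_nsmul_le_sum Finset.univ _ _ fun a _ => hslice a

theorem card_sub_two_pow_mul_le_wt_evalTorus :
    ∀ {n : ℕ} {f : MvPolynomial (Fin n) K}, f ∈ restrictDegree (Fin n) K 1 → f ≠ 0 →
      (Fintype.card K - 2) ^ f.totalDegree * (Fintype.card K - 1) ^ (n - f.totalDegree) ≤
        wt (evalTorus n K f)
  | 0, f, _, hf0 => by
    rw [eq_C_of_isEmpty f] at hf0 ⊢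
    rw [totalDegree_C, pow_zero, pow_zero, one_mul, Nat.one_le_iff_ne_zero,
      ← Nat.pos_iff_ne_zero, wt_pos]
    intro h
    exact hf0 (by simpa [evalTorus_apply] using congrFun h ⟨Fin.elim0, fun i => i.elim0⟩)
  | n + 1, f, hf, hf0 => by
    have ih (g : MvPolynomial (Fin n) K) := @card_sub_two_pow_mul_le_wt_evalTorus n g
    by_cases hroot : ∃ a₀ : {a : K // a ≠ 0},
        (finSuccEquiv K n f).coeff 0 + a₀.1 • (finSuccEquiv K n f).coeff 1 = 0
    · obtain ⟨a₀, hroot⟩ := hroot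
      exact le_wt_evalTorus_succ_of_root hf hf0 ih a₀ hroot
    · push Not at hroot
      exact le_wt_evalTorus_succ_of_forall_ne_zero hf ih hroot

lemma wt_evalTorus_prod_X_sub_X_le {s d : ℕ} (v : Fin d → Fin 2 → Fin s)
    (hv : Function.Injective (Function.uncurry v)) :
    wt (evalTorus s K (∏ r, (X (v r 0) - X (v r 1)))) ≤
      (Fintype.card K - 2) ^ d * (Fintype.card K - 1) ^ (s - d) := by
  set c := evalTorus s K (∏ r, (X (v r 0) - X (v r 1)))
  have hv₁ : Function.Injective (v · 1) := fun r r' h =>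
    congrArg Prod.fst (hv (a₁ := (r, 1)) (a₂ := (r', 1)) h)
  have hv₀₁ (r r' : Fin d) : v r 0 ≠ v r' 1 := fun h => by
    simpa using hv (a₁ := (r, 0)) (a₂ := (r', 1)) h
  have hfactor (P : {P // c P ≠ 0}) (r : Fin d) : P.1.1 (v r 0) - P.1.1 (v r 1) ≠ 0 := by
    have := P.2
    simp only [c, evalTorus_apply, map_prod, map_sub, eval_X] at this
    exact Finset.prod_ne_zero_iff.1 this r (Finset.mem_univ r)
  let Φ : {P // c P ≠ 0} →
      (Fin d → {z : K // z ≠ 0 ∧ z ≠ 1}) × ({i // i ∉ Set.range (v · 1)} → {z : K // z ≠ 0}) :=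
    fun P => (fun r => ⟨P.1.1 (v r 1) / P.1.1 (v r 0), div_ne_zero (P.1.2 _) (P.1.2 _),
        fun h => hfactor P r ((div_eq_one_iff_eq (P.1.2 _)).1 h ▸ sub_self _)⟩,
      fun i => ⟨P.1.1 i, P.1.2 i⟩)
  have hΦ : Function.Injective Φ := by
    intro P P' h
    ext i
    by_cases hi : i ∈ Set.range (v · 1)
    · obtain ⟨r, rfl⟩ := hi
      have h₀ : P.1.1 (v r 0) = P'.1.1 (v r 0) :=
        congrArg Subtype.val <|
          congrFun (congrArg Prod.snd h) ⟨v r 0, fun ⟨r', h'⟩ => hv₀₁ r r' h'.symm⟩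
      have h₁ := congrArg Subtype.val (congrFun (congrArg Prod.fst h) r)
      simp only [Φ, h₀] at h₁
      exact (div_left_inj' (P'.1.2 _)).1 h₁
    · exact congrArg Subtype.val (congrFun (congrArg Prod.snd h) ⟨i, hi⟩)
  calc wt c = Nat.card {P // c P ≠ 0} := rfl
    _ ≤ _ := Nat.card_le_card_of_injective Φ hΦ
    _ = _ := by
      have hcompl : Fintype.card {i // i ∉ Set.range (v · 1)} = s - d := by
        rw [Fintype.card_subtype_compl, Fintype.card_fin, Set.card_range_of_injective hv₁,
          Fintype.card_fin]
      rw [Nat.card_eq_fintype_card, Fintype.card_prod, Fintype.card_fun, Fintype.card_fun,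
        card_subtype_ne_zero_and_ne_one, card_subtype_ne_zero, hcompl, Fintype.card_fin]

lemma le_wt_evalTorus_of_mem_span {s d : ℕ} {E : Set (Finset (Fin s))}
    (hE : ∀ e ∈ E, e.card ≤ d) (hds : d ≤ s)
    {f : MvPolynomial (Fin s) K} (hf : f ∈ Submodule.span K ((fun e => ∏ j ∈ e, X j) '' E))
    (hf0 : f ≠ 0) :
    (Fintype.card K - 2) ^ d * (Fintype.card K - 1) ^ (s - d) ≤ wt (evalTorus s K f) := by
  obtain ⟨hf₁, hfd⟩ := Submodule.mem_inf.1 (span_prod_X_le hE hf)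
  exact (pow_mul_pow_sub_le_pow_mul_pow_sub (by omega) ((mem_restrictTotalDegree _ _ _).1 hfd)
    hds).trans (card_sub_two_pow_mul_le_wt_evalTorus hf₁ hf0)

end FiniteField

theorem minDist_edgeCode_uniform_clutter_low_degree_general
    (q s d : ℕ) (hq : 3 ≤ q) (hds : 2 * d ≤ s)
    (K : Type) [Field K] [Fintype K] (hK : Fintype.card K = q)
    (E : Finset (Finset (Fin s)))
    (huniform : ∀ e ∈ E, e.card = d)
    (hclutter : ContainsPartitePathClutter s d E) :
    minDist (edgeCode s K (E : Set (Finset (Fin s)))) = (q - 2) ^ d * (q - 1) ^ (s - d) := by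
  classical
  subst hK
  obtain ⟨ι, hι, hedges⟩ := hclutter
  set v : Fin d → Fin 2 → Fin s := fun r k => ι ⟨2 * r + k, by omega⟩
  have hv : Function.Injective (Function.uncurry v) := by
    rintro ⟨r, k⟩ ⟨r', k'⟩ h
    have := congrArg Fin.val (hι h)
    simp only [Prod.mk.injEq, Fin.ext_iff] at this ⊢
    omega
  set f₀ := ∏ r, (X (v r 0) - X (v r 1) : MvPolynomial (Fin s) K)
  have hf₀ : f₀ ∈ Submodule.span K ((fun e => ∏ j ∈ e, X j) '' (E : Set (Finset (Fin s)))) := by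
    refine Submodule.span_mono ?_ (prod_X_sub_X_mem_span v)
    rintro _ ⟨τ, rfl⟩
    exact ⟨_, hedges τ, Finset.prod_image fun r _ r' _ h =>
      congrArg Prod.fst (hv (a₁ := (r, τ r)) (a₂ := (r', τ r')) h)⟩
  have hf₀0 : f₀ ≠ 0 := Finset.prod_ne_zero_iff.2 fun r _ => sub_ne_zero.2 <|
    (X_injective (R := K)).ne fun h => by simpa using hv (a₁ := (r, 0)) (a₂ := (r, 1)) h
  have hlow {f : MvPolynomial (Fin s) K} :=
    le_wt_evalTorus_of_mem_span (f := f) (E := E) (fun e he => (huniform e he).le)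
      (by omega : d ≤ s)
  refine minDist_eq_of_forall_le_wt (fun c hc hc0 => ?_) (Submodule.mem_map_of_mem hf₀) ?_
    (wt_evalTorus_prod_X_sub_X_le v hv)
  · obtain ⟨f, hf, rfl⟩ := Submodule.mem_map.1 hc
    exact hlow hf fun hf0 => hc0 (by rw [hf0, map_zero])
  · exact wt_pos.1 ((Nat.mul_pos (Nat.pow_pos (by omega)) (Nat.pow_pos (by omega))).trans_le
      (hlow hf₀ hf₀0))

/-- for `q ≥ 3`, a `d`-uniform hypergraph `C` on `{1,…,s}` with `d ≤ s/2`
which contains the clutter of partite paths `𝔠_{d-1}(J_{d×2})` has edge code of minimum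
distance `(q-2)^d (q-1)^{s-d}`. -/
theorem minDist_edgeCode_uniform_clutter_low_degree
    (q s d : ℕ) (hq : 3 ≤ q) (hd : 1 ≤ d) (hds : 2 * d ≤ s)
    (K : Type) [Field K] [Fintype K] (hK : Fintype.card K = q)
    (E : Finset (Finset (Fin s)))
    (huniform : ∀ e ∈ E, e.card = d)
    (hclutter : ContainsPartitePathClutter s d E) :
    minDist (edgeCode s K (E : Set (Finset (Fin s)))) = (q - 2) ^ d * (q - 1) ^ (s - d) :=
  minDist_edgeCode_uniform_clutter_low_degree_general q s d hq hds K hK E huniform hclutter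
end

section
/- Let q ≥ 3, let d be an integer with s/2 < d < s, and let C be a d-uniform hypergraph on {1,…,s} (every edge of C has exactly d elements) such that its edge-removed hypergraph C* (which is (s−d)-uniform) contains the clutter of partite paths 𝔠_{s−d−1}(J_{(s−d)×2}). Then the minimum distance of the edge code of C is δ(C_C) = (q−2)^{s−d} (q−1)^d. -/
/-!
On the torus `∏_{j ∈ e} t_j = (∏_j t_j) ∏_{j ∉ e} t_j⁻¹`, so after the substitution `t ↦ t⁻¹` a
nonzero codeword of a `d`-uniform hypergraph becomes a nonzero multilinear polynomial of degree at
most `s - d`, with the same number of nonzeros on the torus. Writing such a polynomial as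
`t_0 g + h`, every point where `g ≠ 0` extends in at least `q - 2` ways to a nonzero of the whole
polynomial, and if `g = 0` every point where `h ≠ 0` extends in `q - 1` ways; induction on the
number of variables gives at least `(q - 2)^{s-d} (q - 1)^d` nonzeros.

The bound is attained by `(∏_j t_j) ∏_r (t_{i_{2r-1}}⁻¹ - t_{i_{2r}}⁻¹)`: expanded, its monomials
are the complements of the edges of the clutter of partite paths in `C*`, hence edges of `C`, and it
vanishes exactly where some pair `i_{2r-1}, i_{2r}` has equal coordinates.
-/

open MvPolynomial

open Finset Function

section Multilinear

variable {K : Type*} [Field K]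

/-- The multilinear polynomial with coefficient `c m` at the monomial `∏_{m i} t_i`, evaluated at a
point of the torus `(Kˣ)ⁿ`. -/
def multilinearEval {n : ℕ} (c : (Fin n → Bool) → K) (u : Fin n → Kˣ) : K :=
  ∑ m, c m * ∏ i, if m i then (u i : K) else 1

@[simp]
lemma multilinearEval_zero {n : ℕ} (u : Fin n → Kˣ) :
    multilinearEval (0 : (Fin n → Bool) → K) u = 0 := by
  simp [multilinearEval]

lemma multilinearEval_add {n : ℕ} (c c' : (Fin n → Bool) → K) (u : Fin n → Kˣ) :
    multilinearEval (c + c') u = multilinearEval c u + multilinearEval c' u := by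
  simp only [multilinearEval, Pi.add_apply, add_mul, sum_add_distrib]

lemma multilinearEval_smul {n : ℕ} (a : K) (c : (Fin n → Bool) → K) (u : Fin n → Kˣ) :
    multilinearEval (a • c) u = a * multilinearEval c u := by
  simp only [multilinearEval, Pi.smul_apply, smul_eq_mul, mul_sum, mul_assoc]

lemma multilinearEval_single {n : ℕ} (m : Fin n → Bool) (u : Fin n → Kˣ) :
    multilinearEval (Pi.single m 1) u = ∏ i, if m i then (u i : K) else 1 := by
  rw [multilinearEval, sum_eq_single m (fun m' _ hm' => by simp [hm']) (by simp)]
  simp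

lemma multilinearEval_cons {n : ℕ} (c : (Fin (n + 1) → Bool) → K) (a : Kˣ) (u : Fin n → Kˣ) :
    multilinearEval c (Fin.cons a u) =
      a * multilinearEval (fun m => c (Fin.cons true m)) u +
        multilinearEval (fun m => c (Fin.cons false m)) u := by
  rw [multilinearEval, ← (Fin.consEquiv fun _ => Bool).sum_comp]
  simp only [Fintype.sum_prod_type, Fintype.sum_bool, Fin.consEquiv, Equiv.coe_fn_mk,
    Fin.prod_univ_succ, Fin.cons_zero, Fin.cons_succ, if_true, Bool.false_eq_true, if_false,
    one_mul, multilinearEval, mul_sum]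
  congr 1
  exact sum_congr rfl fun m _ => by ring

variable [Fintype K] [DecidableEq K]

def torusSupportCard {n : ℕ} (c : (Fin n → Bool) → K) : ℕ :=
  #{u : Fin n → Kˣ | multilinearEval c u ≠ 0}

lemma torusSupportCard_succ {n : ℕ} (c : (Fin (n + 1) → Bool) → K) :
    torusSupportCard c = ∑ u : Fin n → Kˣ, #{a : Kˣ |
      a * multilinearEval (fun m => c (Fin.cons true m)) u +
        multilinearEval (fun m => c (Fin.cons false m)) u ≠ 0} := by
  rw [torusSupportCard, card_filter, ← (Fin.consEquiv fun _ => Kˣ).sum_comp,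
    Fintype.sum_prod_type, sum_comm]
  simp only [card_filter, Fin.consEquiv, Equiv.coe_fn_mk, multilinearEval_cons]

lemma card_sub_two_le_card_mul_add_ne_zero {G : K} (hG : G ≠ 0) (H : K) :
    Fintype.card K - 2 ≤ #{a : Kˣ | a * G + H ≠ 0} := by
  have hroot : #{a : Kˣ | ¬(a * G + H ≠ 0)} ≤ 1 := by
    refine card_le_one.2 fun a ha b hb => Units.ext ?_
    simp only [not_not, mem_filter, mem_univ, true_and] at ha hb
    exact mul_right_cancel₀ hG (add_right_cancel (ha.trans hb.symm))
  have := card_filter_add_card_filter_not (s := (univ : Finset Kˣ)) fun a => a * G + H ≠ 0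
  rw [card_univ, Fintype.card_units] at this
  omega

lemma card_sub_two_mul_le_torusSupportCard {n : ℕ} (c : (Fin (n + 1) → Bool) → K) :
    (Fintype.card K - 2) * torusSupportCard (fun m => c (Fin.cons true m)) ≤
      torusSupportCard c := by
  rw [torusSupportCard_succ, torusSupportCard, card_filter, mul_sum]
  refine sum_le_sum fun u _ => ?_
  split_ifs with hG
  · simpa using card_sub_two_le_card_mul_add_ne_zero hG _
  · simp

lemma torusSupportCard_eq_of_cons_true_eq_zero {n : ℕ} (c : (Fin (n + 1) → Bool) → K)
    (hg : (fun m => c (Fin.cons true m)) = 0) :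
    torusSupportCard c =
      (Fintype.card K - 1) * torusSupportCard (fun m => c (Fin.cons false m)) := by
  rw [torusSupportCard_succ, torusSupportCard, card_filter, mul_sum]
  refine sum_congr rfl fun u _ => ?_
  simp only [hg, multilinearEval_zero, mul_zero, zero_add]
  split_ifs with hH <;> simp [hH, Fintype.card_units]

lemma card_filter_fin_cons {n : ℕ} (b : Bool) (m : Fin n → Bool) :
    #{i | (Fin.cons b m : Fin (n + 1) → Bool) i} = #{i | m i} + b.toNat := by
  rw [Fin.card_filter_univ_succ']
  cases b <;> simp [add_comm]

lemma pow_mul_pow_le_mul_pow_min {a b n e : ℕ} (hab : a ≤ b) (hen : e ≤ n + 1) :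
    a ^ e * b ^ (n + 1 - e) ≤ b * (a ^ min e n * b ^ (n - min e n)) := by
  obtain he | rfl : e ≤ n ∨ e = n + 1 := by omega
  · rw [min_eq_left he, show n + 1 - e = n - e + 1 by omega, pow_succ]
    exact le_of_eq (by ring)
  · simp only [min_eq_right (Nat.le_succ n), Nat.sub_self, pow_zero, mul_one, pow_succ]
    rw [mul_comm b]
    exact Nat.mul_le_mul_left _ hab

theorem pow_mul_pow_le_torusSupportCard {n e : ℕ} {c : (Fin n → Bool) → K} (hc : c ≠ 0)
    (hdeg : ∀ m, c m ≠ 0 → #{i | m i} ≤ e) (hen : e ≤ n) :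
    (Fintype.card K - 2) ^ e * (Fintype.card K - 1) ^ (n - e) ≤ torusSupportCard c := by
  induction n generalizing e with
  | zero =>
    obtain rfl : e = 0 := by omega
    obtain ⟨m, hm⟩ := Function.ne_iff.1 hc
    have hc' : ∀ m', c m' ≠ 0 := fun m' => Subsingleton.elim m m' ▸ hm
    simp [torusSupportCard, multilinearEval, hc']
  | succ n ih =>
    have hdeg_cons : ∀ b m, c (Fin.cons b m) ≠ 0 → #{i | m i} + b.toNat ≤ e :=
      fun b m hbm => card_filter_fin_cons b m ▸ hdeg _ hbm
    by_cases hg : (fun m => c (Fin.cons true m)) = 0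
    · have hh : (fun m => c (Fin.cons false m)) ≠ 0 := by
        refine fun hh => hc (funext fun m => Fin.consCases (fun b m => ?_) m)
        cases b
        exacts [congrFun hh m, congrFun hg m]
      have hdeg_h : ∀ m, c (Fin.cons false m) ≠ 0 → #{i | m i} ≤ min e n := fun m hm =>
        le_min (by simpa using hdeg_cons false m hm) ((card_filter_le _ _).trans_eq (card_fin n))
      rw [torusSupportCard_eq_of_cons_true_eq_zero c hg]
      exact (pow_mul_pow_le_mul_pow_min (by omega) hen).trans
        (Nat.mul_le_mul_left _ (ih hh hdeg_h (min_le_right e n)))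
    · obtain ⟨m, hm⟩ := Function.ne_iff.1 hg
      obtain ⟨e, rfl⟩ : ∃ e', e = e' + 1 :=
        ⟨e - 1, by have := hdeg_cons true m hm; rw [Bool.toNat_true] at this; omega⟩
      have hdeg_g : ∀ m, c (Fin.cons true m) ≠ 0 → #{i | m i} ≤ e := fun m hm => by
        simpa using hdeg_cons true m hm
      calc (Fintype.card K - 2) ^ (e + 1) * (Fintype.card K - 1) ^ (n + 1 - (e + 1))
          = (Fintype.card K - 2) * ((Fintype.card K - 2) ^ e * (Fintype.card K - 1) ^ (n - e)) := by
            rw [Nat.add_sub_add_right, pow_succ]; ring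
        _ ≤ (Fintype.card K - 2) * torusSupportCard (fun m => c (Fin.cons true m)) :=
            Nat.mul_le_mul_left _ (ih hg hdeg_g (by omega))
        _ ≤ _ := card_sub_two_mul_le_torusSupportCard c

end Multilinear

theorem card_forall_injective_comp_embedding {α ι β M : Type*} [Fintype α] [Fintype ι]
    [Fintype β] [Fintype M] (κ : α × ι ↪ β) :
    Nat.card {u : β → M // ∀ a, Injective fun i => u (κ (a, i))} =
      (Fintype.card M).descFactorial (Fintype.card ι) ^ Fintype.card α *
        Fintype.card M ^ (Fintype.card β - Fintype.card α * Fintype.card ι) := by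
  classical
  let split : (β → M) ≃ (α × ι → M) × ({b // b ∉ Set.range κ} → M) :=
    (Equiv.piEquivPiSubtypeProd (· ∈ Set.range κ) _).trans <|
      (Equiv.arrowCongr (Equiv.ofInjective κ κ.injective).symm (Equiv.refl M)).prodCongr
        (Equiv.refl _)
  let blocks : {v : α × ι → M // ∀ a, Injective fun i => v (a, i)} ≃ (α → ι ↪ M) :=
    ((Equiv.curry α ι M).subtypeEquiv fun _ => Iff.rfl).trans <|
      Equiv.subtypePiEquivPi.trans <|
        Equiv.piCongrRight fun _ => Equiv.subtypeInjectiveEquivEmbedding ι M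
  have e : {u : β → M // ∀ a, Injective fun i => u (κ (a, i))} ≃
      (α → ι ↪ M) × ({b // b ∉ Set.range κ} → M) :=
    (split.subtypeEquiv (q := fun v => ∀ a, Injective fun i => v.1 (a, i)) fun u => by
      simp [split]).trans <|
      Equiv.prodSubtypeFstEquivSubtypeProd.trans (blocks.prodCongr (Equiv.refl _))
  rw [Nat.card_congr e, Nat.card_eq_fintype_card, Fintype.card_prod, Fintype.card_fun,
    Fintype.card_fun, Fintype.card_embedding_eq, Fintype.card_subtype_compl,
    Set.card_range_of_injective κ.injective, Fintype.card_prod]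

lemma injective_fin_two_iff {α : Type*} {f : Fin 2 → α} : Injective f ↔ f 0 ≠ f 1 := by
  refine ⟨fun h e => zero_ne_one (h e), fun h i j hij => ?_⟩
  fin_cases i <;> fin_cases j <;> simp_all [eq_comm]

section EdgeCode

variable {s : ℕ} {K : Type} [Field K]

def unitsEquivTorus (s : ℕ) (K : Type) [Field K] : (Fin s → Kˣ) ≃ Torus s K where
  toFun u := ⟨fun i => u i, fun i => (u i).ne_zero⟩
  invFun P i := Units.mk0 (P.1 i) (P.2 i)
  left_inv u := by ext; simp
  right_inv P := by ext; simp

lemma evalTorus_unitsEquivTorus (f : MvPolynomial (Fin s) K) (u : Fin s → Kˣ) :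
    evalTorus s K f (unitsEquivTorus s K u) = aeval (fun i => (u i : K)) f :=
  rfl

lemma wt_eq_card [Fintype K] [DecidableEq K] (w : Torus s K → K) :
    wt w = #{u : Fin s → Kˣ | w (unitsEquivTorus s K u) ≠ 0} := by
  rw [wt, ← Set.ncard_coe_finset, ← Set.ncard_image_of_injective _ (unitsEquivTorus s K).injective,
    Equiv.image_eq_preimage_symm]
  congr 1
  ext P
  simp

lemma exists_multilinearEval_inv_of_mem_span {E : Set (Finset (Fin s))} {d : ℕ}
    (hE : ∀ e ∈ E, #e = d) {f : MvPolynomial (Fin s) K}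
    (hf : f ∈ Submodule.span K ((fun e : Finset (Fin s) => ∏ j ∈ e, X j) '' E)) :
    ∃ c : (Fin s → Bool) → K, (∀ m, c m ≠ 0 → #{i | m i} = s - d) ∧
      ∀ u : Fin s → Kˣ,
        aeval (fun i => (u i : K)) f = (∏ i, (u i : K)) * multilinearEval c u⁻¹ := by
  induction hf using Submodule.span_induction with
  | mem f hf =>
    obtain ⟨e, he, rfl⟩ := hf
    refine ⟨Pi.single (fun j => decide (j ∉ e)) 1, fun m hm => ?_, fun u => ?_⟩
    · obtain rfl : m = fun j => decide (j ∉ e) := by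
        by_contra h
        exact hm (Pi.single_eq_of_ne h _)
      simp [← hE e he, filter_not, card_univ_sdiff]
    · have hcompl : (∏ i, if decide (i ∉ e) then ((u⁻¹ i : Kˣ) : K) else 1) =
          ∏ i ∈ eᶜ, (u i : K)⁻¹ := by
        rw [← prod_filter]
        congr 1 with i
        · simp
        · simp [Units.val_inv_eq_inv_val]
      rw [multilinearEval_single, hcompl, map_prod, ← prod_mul_prod_compl e, mul_assoc,
        ← prod_mul_distrib, prod_eq_one fun i _ => mul_inv_cancel₀ (u i).ne_zero, mul_one]
      simp
  | zero => exact ⟨0, by simp, by simp⟩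
  | add f g _ _ hf hg =>
    obtain ⟨c, hc, hfc⟩ := hf
    obtain ⟨c', hc', hgc'⟩ := hg
    refine ⟨c + c', fun m hm => ?_, fun u => ?_⟩
    · by_cases h : c m = 0
      · exact hc' m (by simpa [h] using hm)
      · exact hc m h
    · rw [map_add, hfc, hgc', multilinearEval_add, mul_add]
  | smul a f _ hf =>
    obtain ⟨c, hc, hfc⟩ := hf
    refine ⟨a • c, fun m hm => hc m (right_ne_zero_of_mul hm), fun u => ?_⟩
    rw [map_smul, hfc, multilinearEval_smul, smul_eq_mul]
    ring

lemma wt_evalTorus_eq_torusSupportCard [Fintype K] [DecidableEq K] {f : MvPolynomial (Fin s) K}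
    {c : (Fin s → Bool) → K}
    (hfc : ∀ u : Fin s → Kˣ,
      aeval (fun i => (u i : K)) f = (∏ i, (u i : K)) * multilinearEval c u⁻¹) :
    wt (evalTorus s K f) = torusSupportCard c := by
  have hsupp : ∀ u, evalTorus s K f (unitsEquivTorus s K u) ≠ 0 ↔ multilinearEval c u⁻¹ ≠ 0 :=
    fun u => by
      rw [evalTorus_unitsEquivTorus, hfc, mul_ne_zero_iff,
        and_iff_right (prod_ne_zero_iff.2 fun i _ => (u i).ne_zero)]
  simp_rw [wt_eq_card, hsupp, torusSupportCard]
  exact card_nbij' (·⁻¹) (·⁻¹) (fun u => by simp) (fun u => by simp) (fun u _ => inv_inv u)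
    (fun u _ => inv_inv u)

theorem pow_mul_pow_le_wt_of_mem_edgeCode [Fintype K] {E : Set (Finset (Fin s))} {d : ℕ}
    (hE : ∀ e ∈ E, #e = d) (hd : d ≤ s) {w : Torus s K → K} (hw : w ∈ edgeCode s K E)
    (hw0 : w ≠ 0) :
    (Fintype.card K - 2) ^ (s - d) * (Fintype.card K - 1) ^ d ≤ wt w := by
  classical
  obtain ⟨f, hf, rfl⟩ := hw
  obtain ⟨c, hdeg, hfc⟩ := exists_multilinearEval_inv_of_mem_span hE hf
  have hc : c ≠ 0 := by
    rintro rfl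
    refine hw0 (funext fun P => ?_)
    rw [← (unitsEquivTorus s K).apply_symm_apply P, evalTorus_unitsEquivTorus, hfc]
    simp
  rw [wt_evalTorus_eq_torusSupportCard hfc]
  simpa [Nat.sub_sub_self hd] using
    pow_mul_pow_le_torusSupportCard hc (fun m hm => (hdeg m hm).le) (Nat.sub_le s d)

variable {m : ℕ}

/-- The expansion of `(∏_j t_j) ∏_r (t_{κ (r, 0)}⁻¹ - t_{κ (r, 1)}⁻¹)`: its monomials are the
complements of the transversals `{κ (r, σ r)}` of the pairs. -/
noncomputable def partitePathPolynomial (K : Type) [Field K] (κ : Fin m × Fin 2 ↪ Fin s) :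
    MvPolynomial (Fin s) K :=
  ∑ σ : Fin m → Fin 2, (∏ r, (-1 : K) ^ (σ r : ℕ)) • ∏ j ∈ (univ.image fun r => κ (r, σ r))ᶜ, X j

lemma partitePathPolynomial_mem_span (κ : Fin m × Fin 2 ↪ Fin s) {E : Set (Finset (Fin s))}
    (hE : ∀ σ : Fin m → Fin 2, (univ.image fun r => κ (r, σ r))ᶜ ∈ E) :
    partitePathPolynomial K κ ∈
      Submodule.span K ((fun e : Finset (Fin s) => ∏ j ∈ e, X j) '' E) :=
  Submodule.sum_mem _ fun σ _ => Submodule.smul_mem _ _ (Submodule.subset_span ⟨_, hE σ, rfl⟩)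

lemma aeval_partitePathPolynomial (κ : Fin m × Fin 2 ↪ Fin s) (u : Fin s → Kˣ) :
    aeval (fun i => (u i : K)) (partitePathPolynomial K κ) =
      (∏ i, (u i : K)) * ∏ r, ((u (κ (r, 0)) : K)⁻¹ - (u (κ (r, 1)) : K)⁻¹) := by
  have hcompl : ∀ σ : Fin m → Fin 2, ∏ j ∈ (univ.image fun r => κ (r, σ r))ᶜ, (u j : K) =
      (∏ i, (u i : K)) * ∏ r, (u (κ (r, σ r)) : K)⁻¹ := fun σ => by
    rw [prod_inv_distrib, ← div_eq_mul_inv,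
      eq_div_iff (prod_ne_zero_iff.2 fun r _ => (u _).ne_zero),
      ← prod_compl_mul_prod (univ.image fun r => κ (r, σ r)), prod_image]
    exact fun r _ r' _ h => (Prod.ext_iff.1 (κ.injective h)).1
  simp only [partitePathPolynomial, map_sum, map_smul, map_prod, aeval_X, smul_eq_mul, hcompl,
    mul_left_comm _ (∏ i, (u i : K)), ← mul_sum, ← prod_mul_distrib]
  rw [← Fintype.prod_sum fun r (b : Fin 2) => (-1 : K) ^ (b : ℕ) * (u (κ (r, b)) : K)⁻¹]
  simp [Fin.sum_univ_two, sub_eq_add_neg]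

theorem wt_evalTorus_partitePathPolynomial [Fintype K] (κ : Fin m × Fin 2 ↪ Fin s) :
    wt (evalTorus s K (partitePathPolynomial K κ)) =
      (Fintype.card K - 2) ^ m * (Fintype.card K - 1) ^ (s - m) := by
  classical
  have hsupp : ∀ u : Fin s → Kˣ,
      evalTorus s K (partitePathPolynomial K κ) (unitsEquivTorus s K u) ≠ 0 ↔
        ∀ r, Injective fun b => u (κ (r, b)) := fun u => by
    rw [evalTorus_unitsEquivTorus, aeval_partitePathPolynomial, mul_ne_zero_iff,
      and_iff_right (prod_ne_zero_iff.2 fun i _ => (u i).ne_zero), prod_ne_zero_iff]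
    simp [injective_fin_two_iff, sub_ne_zero, Units.val_inj]
  have hm : m * 2 ≤ s := by simpa using Fintype.card_le_of_embedding κ
  rw [wt_eq_card, filter_congr fun u _ => hsupp u, ← Fintype.card_subtype,
    ← Nat.card_eq_fintype_card, card_forall_injective_comp_embedding]
  simp only [Fintype.card_units, Fintype.card_fin, Nat.descFactorial,
    Nat.sub_sub, mul_pow]
  rw [show s - m = m + (s - m * 2) by omega, pow_add]
  ring

lemma minDist_eq_wt {C : Submodule K (Torus s K → K)} {w : Torus s K → K} (hw : w ∈ C)
    (hw0 : w ≠ 0) (hmin : ∀ v ∈ C, v ≠ 0 → wt w ≤ wt v) : minDist C = wt w :=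
  le_antisymm (Nat.sInf_le ⟨w, hw, hw0, rfl⟩)
    (le_csInf ⟨_, w, hw, hw0, rfl⟩ fun _ ⟨v, hv, hv0, hvb⟩ => hvb ▸ hmin v hv hv0)

end EdgeCode

lemma ContainsPartitePathClutter.exists_embedding {s m : ℕ} {F : Finset (Finset (Fin s))}
    (h : ContainsPartitePathClutter s m F) :
    ∃ κ : Fin m × Fin 2 ↪ Fin s, ∀ σ : Fin m → Fin 2, univ.image (fun r => κ (r, σ r)) ∈ F := by
  obtain ⟨ι, hι, hF⟩ := h
  refine ⟨⟨fun p => ι ⟨2 * p.1 + p.2, by omega⟩, fun p p' hp => ?_⟩, hF⟩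
  have := congrArg Fin.val (hι hp)
  simp only at this
  ext <;> omega

theorem minDist_edgeCode_uniform_clutter_high_degree_general
    (q s d : ℕ) (hq : 3 ≤ q)
    (K : Type) [Field K] [Fintype K] (hK : Fintype.card K = q)
    (E : Finset (Finset (Fin s)))
    (huniform : ∀ e ∈ E, e.card = d)
    (hclutter : ContainsPartitePathClutter s (s - d) (E.image fun e => eᶜ)) :
    minDist (edgeCode s K (E : Set (Finset (Fin s)))) = (q - 2) ^ (s - d) * (q - 1) ^ d := by
  subst hK
  obtain ⟨κ, hκ⟩ := hclutter.exists_embedding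
  have hE : ∀ σ : Fin (s - d) → Fin 2, (univ.image fun r => κ (r, σ r))ᶜ ∈ E := fun σ => by
    obtain ⟨e, he, he'⟩ := mem_image.1 (hκ σ)
    rwa [← he', compl_compl]
  have hd : d ≤ s := huniform _ (hE 0) ▸ (card_le_univ _).trans_eq (Fintype.card_fin s)
  have hwt := wt_evalTorus_partitePathPolynomial (K := K) κ
  rw [Nat.sub_sub_self hd] at hwt
  have hw0 : evalTorus s K (partitePathPolynomial K κ) ≠ 0 := fun h => by
    have hpos : 0 < (Fintype.card K - 2) ^ (s - d) * (Fintype.card K - 1) ^ d :=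
      Nat.mul_pos (Nat.pow_pos (by omega)) (Nat.pow_pos (by omega))
    simp [h, wt] at hwt
    omega
  rw [← hwt]
  exact minDist_eq_wt (Submodule.mem_map_of_mem (partitePathPolynomial_mem_span κ hE)) hw0
    fun v hv hv0 => hwt ▸ pow_mul_pow_le_wt_of_mem_edgeCode huniform hd hv hv0

/-- for `q ≥ 3`, a `d`-uniform hypergraph `C` on `{1,…,s}` with
`s/2 < d < s` whose edge-removed hypergraph `C*` contains the clutter of partite paths
`𝔠_{s-d-1}(J_{(s-d)×2})` has edge code of minimum distance `(q-2)^{s-d} (q-1)^d`. -/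
theorem minDist_edgeCode_uniform_clutter_high_degree
    (q s d : ℕ) (hq : 3 ≤ q) (hlow : s < 2 * d) (hhigh : d < s)
    (K : Type) [Field K] [Fintype K] (hK : Fintype.card K = q)
    (E : Finset (Finset (Fin s)))
    (huniform : ∀ e ∈ E, e.card = d)
    (hclutter : ContainsPartitePathClutter s (s - d) (E.image fun e => eᶜ)) :
    minDist (edgeCode s K (E : Set (Finset (Fin s)))) = (q - 2) ^ (s - d) * (q - 1) ^ d :=
  minDist_edgeCode_uniform_clutter_high_degree_general q s d hq K hK E huniform hclutter
end

section
/- Let q ≥ 3 and let 1 ≤ d_2 ≤ d_1 be integers with d_1 + d_2 ≤ s. Let H be the hypergraph on {1,…,s} whose edges are all subsets e ⊆ {1,…,s} with d_2 ≤ |e| ≤ d_1. Then the minimum distance of the edge code of H is δ(C_H) = (q−2)^{d_1} (q−1)^{s−d_1}. -/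
open MvPolynomial

/-!
Lower bound: a nonzero polynomial `f` in `n` variables, of degree at most one in each variable and
of total degree at most `d ≤ n`, is nonzero at `(q-2)^d (q-1)^(n-d)` or more points of the torus.
Write `f = h + g x₀` with `g, h` free of `x₀`. At a torus point `Q` of the other variables with
`g(Q) ≠ 0`, at most one `a ≠ 0` is a root of `h(Q) + g(Q) a`; so induction on `n` applies to `g`
(of total degree at most `d - 1`) when `g ≠ 0`, and to `h` when `g = 0`.

Upper bound: `∏_{j<d₂} (x_{u j} - x_{v j}) ∏_{d₂≤j<d₁} (x_{w j} - 1)`, over pairwise distinct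
variables, is a combination of squarefree monomials of degrees between `d₂` and `d₁`. Its factors
involve disjoint blocks of variables, so its nonzeros on the torus are counted block by block:
`((q-1)(q-2))^{d₂} (q-2)^{d₁-d₂} (q-1)^{s-d₁-d₂}`, which is the lower bound.
-/

open Finset

lemma card_filter_ne_and_ne {α : Type*} [Fintype α] [DecidableEq α] (x y : α) :
    #({a | a ≠ x ∧ a ≠ y} : Finset α) = Fintype.card α - #{x, y} := by
  rw [← card_univ, ← card_sdiff_of_subset (subset_univ _)]
  congr 1
  ext a
  simp

lemma sub_two_le_card_filter_ne_zero_and_add_mul_ne_zero {K : Type*} [Field K] [Fintype K]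
    [DecidableEq K] (b : K) {c : K} (hc : c ≠ 0) :
    Fintype.card K - 2 ≤ #({a | a ≠ 0 ∧ b + c * a ≠ 0} : Finset K) := by
  have hroot : ∀ a, b + c * a ≠ 0 ↔ a ≠ -b / c := fun a => by
    rw [ne_eq, ne_eq, eq_div_iff hc, mul_comm, eq_neg_iff_add_eq_zero, add_comm]
  simp only [hroot, card_filter_ne_and_ne]
  exact Nat.sub_le_sub_left card_le_two _

lemma pow_mul_pow_sub_le_mul_pow_min_mul_pow_sub {x y d n : ℕ} (hxy : x ≤ y) (hdn : d ≤ n + 1) :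
    x ^ d * y ^ (n + 1 - d) ≤ y * (x ^ min d n * y ^ (n - min d n)) := by
  rcases Nat.lt_or_ge n d with hnd | hdn'
  · obtain rfl : d = n + 1 := by omega
    rw [min_eq_right hnd.le, Nat.sub_self, Nat.sub_self, pow_zero, mul_one, mul_one, pow_succ']
    exact Nat.mul_le_mul_right _ hxy
  · rw [min_eq_left hdn', Nat.sub_add_comm hdn', pow_succ]
    exact (by ring : _ = _).le

namespace MvPolynomial

section Degree

variable {R : Type*} [CommSemiring R]

lemma eval_cons_eq_of_degreeOf_zero_le_one {n : ℕ} {f : MvPolynomial (Fin (n + 1)) R}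
    (hf : degreeOf 0 f ≤ 1) (a : R) (Q : Fin n → R) :
    eval (Fin.cons a Q : Fin (n + 1) → R) f =
      eval Q ((finSuccEquiv R n f).coeff 0) + eval Q ((finSuccEquiv R n f).coeff 1) * a := by
  rw [eval_eq_eval_mv_eval']
  conv_lhs => rw [Polynomial.eq_X_add_C_of_natDegree_le_one (p := finSuccEquiv R n f)
    (by rwa [natDegree_finSuccEquiv])]
  simp only [Polynomial.map_add, Polynomial.map_mul, Polynomial.map_C, Polynomial.map_X,
    Polynomial.eval_add, Polynomial.eval_mul, Polynomial.eval_C, Polynomial.eval_X]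
  ring

lemma totalDegree_le_card_of_degreeOf_le_one {σ : Type*} [Fintype σ] {f : MvPolynomial σ R}
    (hf : ∀ i, degreeOf i f ≤ 1) : f.totalDegree ≤ Fintype.card σ := by
  classical
  have hnodup : f.degrees.Nodup :=
    Multiset.nodup_iff_count_le_one.mpr fun i => degreeOf_def i f ▸ hf i
  calc f.totalDegree ≤ Multiset.card f.degrees := totalDegree_le_degrees_card f
    _ = #f.degrees.toFinset := (Multiset.toFinset_card_of_nodup hnodup).symm
    _ ≤ Fintype.card σ := card_le_univ _

end Degree

section EdgeSpan

variable (R : Type*) [CommSemiring R] {σ : Type*}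

/-- The span `KE(H)` for the hypergraph `H` whose edges are the `e ⊆ V` with `a ≤ #e ≤ b`. -/
noncomputable def edgeSpan (V : Set σ) (a b : ℕ) : Submodule R (MvPolynomial σ R) :=
  Submodule.span R ((fun e : Finset σ => ∏ j ∈ e, X j) '' {e | ↑e ⊆ V ∧ a ≤ #e ∧ #e ≤ b})

variable {R} {V W : Set σ} {a b c d : ℕ}

lemma prod_X_mem_edgeSpan {e : Finset σ} (hV : ↑e ⊆ V) (ha : a ≤ #e) (hb : #e ≤ b) :
    ∏ j ∈ e, X j ∈ edgeSpan R V a b :=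
  Submodule.subset_span ⟨e, ⟨hV, ha, hb⟩, rfl⟩

lemma X_mem_edgeSpan {j : σ} (hj : j ∈ V) (ha : a ≤ 1) (hb : 1 ≤ b) :
    X j ∈ edgeSpan R V a b := by
  simpa using prod_X_mem_edgeSpan (R := R) (e := {j}) (by simpa using hj) ha hb

lemma one_mem_edgeSpan : (1 : MvPolynomial σ R) ∈ edgeSpan R V 0 b := by
  simpa using prod_X_mem_edgeSpan (R := R) (e := ∅) (V := V) (b := b) (by simp) le_rfl (by simp)

lemma edgeSpan_mono {a' b' : ℕ} (hV : V ⊆ W) (ha : a' ≤ a) (hb : b ≤ b') :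
    edgeSpan R V a b ≤ edgeSpan R W a' b' :=
  Submodule.span_mono <| Set.image_mono fun _ he =>
    ⟨he.1.trans hV, ha.trans he.2.1, he.2.2.trans hb⟩

lemma rename_mem_edgeSpan {τ : Type*} {i : σ → τ} (hi : Function.Injective i)
    {f : MvPolynomial σ R} (hf : f ∈ edgeSpan R V a b) : rename i f ∈ edgeSpan R (i '' V) a b := by
  refine (?_ : (edgeSpan R V a b).map (rename i).toLinearMap ≤ _) (Submodule.mem_map_of_mem hf)
  rw [edgeSpan, Submodule.map_span_le]
  rintro _ ⟨e, ⟨heV, ha, hb⟩, rfl⟩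
  classical
  have hrename : rename i (∏ j ∈ e, X j) = ∏ j ∈ e.map ⟨i, hi⟩, (X j : MvPolynomial τ R) := by
    simp [map_prod, prod_map]
  rw [AlgHom.toLinearMap_apply, hrename]
  exact prod_X_mem_edgeSpan (by simpa using Set.image_mono heV) (by simpa) (by simpa)

lemma mul_mem_edgeSpan [DecidableEq σ] (hVW : Disjoint V W) {f g : MvPolynomial σ R}
    (hf : f ∈ edgeSpan R V a b) (hg : g ∈ edgeSpan R W c d) :
    f * g ∈ edgeSpan R (V ∪ W) (a + c) (b + d) := by
  refine (?_ : edgeSpan R V a b * edgeSpan R W c d ≤ _) (Submodule.mul_mem_mul hf hg)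
  rw [edgeSpan, edgeSpan, Submodule.span_mul_span, Submodule.span_le]
  rintro _ ⟨_, ⟨e, ⟨heV, hae, heb⟩, rfl⟩, _, ⟨e', ⟨he'W, hce', he'd⟩, rfl⟩, rfl⟩
  have hdisj : Disjoint e e' := by rw [← disjoint_coe]; exact hVW.mono heV he'W
  show (∏ j ∈ e, X j) * (∏ j ∈ e', X j) ∈ _
  rw [← prod_union hdisj]
  refine prod_X_mem_edgeSpan (by push_cast; exact Set.union_subset_union heV he'W) ?_ ?_ <;>
    rw [card_union_of_disjoint hdisj] <;> omega

lemma prod_rename_sigmaMk_mem_edgeSpan {ι : Type*} [DecidableEq ι] {τ : ι → Type*}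
    [∀ i, DecidableEq (τ i)] {p : ∀ i, MvPolynomial (τ i) R} {a b : ι → ℕ}
    (hp : ∀ i, p i ∈ edgeSpan R Set.univ (a i) (b i)) (s : Finset ι) :
    ∏ i ∈ s, rename (Sigma.mk i) (p i) ∈
      edgeSpan R (Sigma.fst ⁻¹' s) (∑ i ∈ s, a i) (∑ i ∈ s, b i) := by
  induction s using Finset.induction_on with
  | empty => simpa using one_mem_edgeSpan
  | insert i s hi ih =>
    rw [prod_insert hi, sum_insert hi, sum_insert hi]
    have hdisj : Disjoint (Sigma.mk i '' Set.univ) (Sigma.fst ⁻¹' ↑s : Set (Σ i, τ i)) := by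
      rw [Set.disjoint_left]; rintro _ ⟨_, -, rfl⟩ h; exact hi h
    refine edgeSpan_mono ?_ le_rfl le_rfl
      (mul_mem_edgeSpan hdisj (rename_mem_edgeSpan sigma_mk_injective (hp i)) ih)
    rintro _ (⟨_, -, rfl⟩ | hx) <;> simp_all

lemma edgeSpan_le_restrictDegree_inf_restrictTotalDegree [Nontrivial R] (V : Set σ) (a b : ℕ) :
    edgeSpan R V a b ≤ restrictDegree σ R 1 ⊓ restrictTotalDegree σ R b := by
  classical
  rw [edgeSpan, Submodule.span_le]
  rintro _ ⟨e, ⟨-, -, hb⟩, rfl⟩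
  refine ⟨(mem_restrictDegree _ _ _).mpr fun m hm i => degreeOf_le_iff.mp ?_ m hm,
    (mem_restrictTotalDegree _ _ _).mpr ?_⟩
  · refine (degreeOf_prod_le i e X).trans ?_
    simp only [degreeOf_X, sum_ite_eq]
    split_ifs <;> simp
  · refine (totalDegree_finsetProd e X).trans ?_
    simpa [totalDegree_X] using hb

end EdgeSpan

variable {K : Type*} [Field K]

section Extremal

def blockSize {a b c : ℕ} : Fin a ⊕ Fin b ⊕ Fin c → ℕ := Sum.elim (fun _ => 2) (fun _ => 1)

variable (K) in
/-- The extremal codeword is the product of these factors over disjoint blocks of variables;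
the variables of the blocks of the third kind do not occur in it. -/
noncomputable def blockPoly {a b c : ℕ} :
    (i : Fin a ⊕ Fin b ⊕ Fin c) → MvPolynomial (Fin (blockSize i)) K
  | .inl _ => (X 0 - X 1 : MvPolynomial (Fin 2) K)
  | .inr (.inl _) => (X 0 - 1 : MvPolynomial (Fin 1) K)
  | .inr (.inr _) => (1 : MvPolynomial (Fin 1) K)

lemma blockPoly_mem_edgeSpan {a b c : ℕ} (i : Fin a ⊕ Fin b ⊕ Fin c) :
    blockPoly K i ∈ edgeSpan K Set.univ (Sum.elim (fun _ => 1) (fun _ => 0) i)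
      (Sum.elim (fun _ => 1) (Sum.elim (fun _ => 1) (fun _ => 0)) i) := by
  rcases i with i | i | i
  · exact sub_mem (X_mem_edgeSpan trivial le_rfl le_rfl) (X_mem_edgeSpan trivial le_rfl le_rfl)
  · exact sub_mem (X_mem_edgeSpan trivial zero_le_one le_rfl) one_mem_edgeSpan
  · exact one_mem_edgeSpan

end Extremal

variable [Fintype K] [DecidableEq K]

section Torus

variable {σ : Type*} [Fintype σ] [DecidableEq σ]

def torusPoints : Finset (σ → K) := {P | ∀ i, P i ≠ 0}

noncomputable def torusNonzeros (f : MvPolynomial σ K) : Finset (σ → K) :=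
  {P | (∀ i, P i ≠ 0) ∧ eval P f ≠ 0}

@[simp]
lemma mem_torusPoints {P : σ → K} : P ∈ torusPoints ↔ ∀ i, P i ≠ 0 := by
  simp [torusPoints]

@[simp]
lemma mem_torusNonzeros {f : MvPolynomial σ K} {P : σ → K} :
    P ∈ torusNonzeros f ↔ (∀ i, P i ≠ 0) ∧ eval P f ≠ 0 := by
  simp [torusNonzeros]

lemma card_torusPoints :
    #(torusPoints : Finset (σ → K)) = (Fintype.card K - 1) ^ Fintype.card σ := by
  have : (torusPoints : Finset (σ → K)) = Fintype.piFinset fun _ => univ.erase 0 := by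
    ext P
    simp [Fintype.mem_piFinset]
  rw [this, Fintype.card_piFinset, prod_const, card_erase_of_mem (mem_univ _), card_univ,
    card_univ]

lemma torusNonzeros_one : torusNonzeros (1 : MvPolynomial σ K) = torusPoints := by
  ext P
  simp

lemma card_torusNonzeros_rename_equiv {τ : Type*} [Fintype τ] [DecidableEq τ] (e : σ ≃ τ)
    (f : MvPolynomial σ K) : #(torusNonzeros (rename e f)) = #(torusNonzeros f) := by
  refine card_equiv (e.symm.arrowCongr (Equiv.refl K)) fun P => ?_
  simp only [mem_torusNonzeros, eval_rename]
  exact and_congr e.forall_congr_right.symm Iff.rfl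

lemma card_torusNonzeros_prod_rename_sigmaMk {ι : Type*} [Fintype ι] [DecidableEq ι]
    {τ : ι → Type*} [∀ i, Fintype (τ i)] [∀ i, DecidableEq (τ i)]
    (p : ∀ i, MvPolynomial (τ i) K) :
    #(torusNonzeros (∏ i, rename (Sigma.mk i) (p i))) = ∏ i, #(torusNonzeros (p i)) := by
  rw [← Fintype.card_piFinset]
  refine card_equiv (Equiv.piCurry fun _ _ => K) fun P => ?_
  simp [Fintype.mem_piFinset, eval_rename, prod_ne_zero_iff, Sigma.forall, forall_and]
  rfl

end Torus

section LowerBound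

variable {n : ℕ}

lemma card_torusNonzeros_finSucc (f : MvPolynomial (Fin (n + 1)) K) :
    #(torusNonzeros f) = ∑ Q ∈ torusPoints,
      #({a | a ≠ 0 ∧ eval (Fin.cons a Q : Fin (n + 1) → K) f ≠ 0} : Finset K) := by
  rw [← card_sigma]
  refine card_nbij' (fun P => ⟨Fin.tail P, P 0⟩) (fun x => Fin.cons x.2 x.1) ?_ ?_ ?_ ?_
  · intro P hP
    simp_all [Fin.forall_fin_succ, Fin.tail]
  · rintro ⟨Q, a⟩ h
    simp_all [Fin.forall_fin_succ]
  · intro P _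
    simp
  · rintro ⟨Q, a⟩ _
    simp

lemma mul_card_torusNonzeros_le {m : ℕ} {f : MvPolynomial (Fin (n + 1)) K}
    {k : MvPolynomial (Fin n) K}
    (hfiber : ∀ Q ∈ torusNonzeros k,
      m ≤ #({a | a ≠ 0 ∧ eval (Fin.cons a Q : Fin (n + 1) → K) f ≠ 0} : Finset K)) :
    m * #(torusNonzeros k) ≤ #(torusNonzeros f) := by
  rw [card_torusNonzeros_finSucc, mul_comm, ← smul_eq_mul]
  refine (card_nsmul_le_sum _ _ _ hfiber).trans (sum_le_sum_of_subset fun Q hQ => ?_)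
  simp only [mem_torusNonzeros, mem_torusPoints] at hQ ⊢
  exact hQ.1

lemma sub_one_mul_card_torusNonzeros_coeff_zero_le {f : MvPolynomial (Fin (n + 1)) K}
    (hf : degreeOf 0 f ≤ 1) (hg : (finSuccEquiv K n f).coeff 1 = 0) :
    (Fintype.card K - 1) * #(torusNonzeros ((finSuccEquiv K n f).coeff 0)) ≤
      #(torusNonzeros f) := by
  refine mul_card_torusNonzeros_le fun Q hQ => ?_
  simp [eval_cons_eq_of_degreeOf_zero_le_one hf, hg, (mem_torusNonzeros.mp hQ).2, filter_ne',
    card_univ]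

lemma sub_two_mul_card_torusNonzeros_coeff_one_le {f : MvPolynomial (Fin (n + 1)) K}
    (hf : degreeOf 0 f ≤ 1) :
    (Fintype.card K - 2) * #(torusNonzeros ((finSuccEquiv K n f).coeff 1)) ≤
      #(torusNonzeros f) := by
  refine mul_card_torusNonzeros_le fun Q hQ => ?_
  simp only [eval_cons_eq_of_degreeOf_zero_le_one hf]
  exact sub_two_le_card_filter_ne_zero_and_add_mul_ne_zero _ (mem_torusNonzeros.mp hQ).2

theorem pow_mul_pow_le_card_torusNonzeros {d : ℕ} {f : MvPolynomial (Fin n) K} (hf : f ≠ 0)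
    (hsq : ∀ i, degreeOf i f ≤ 1) (hdeg : f.totalDegree ≤ d) (hdn : d ≤ n) :
    (Fintype.card K - 2) ^ d * (Fintype.card K - 1) ^ (n - d) ≤ #(torusNonzeros f) := by
  induction n generalizing d with
  | zero =>
    obtain rfl : d = 0 := Nat.le_zero.mp hdn
    rw [eq_C_of_isEmpty f] at hf ⊢
    exact card_pos.mpr ⟨Fin.elim0, mem_torusNonzeros.mpr ⟨fun i => i.elim0, by simpa using hf⟩⟩
  | succ n ih =>
    set F := finSuccEquiv K n f with hF
    have hsqF : ∀ k j, degreeOf j (F.coeff k) ≤ 1 :=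
      fun k j => (degreeOf_coeff_finSuccEquiv f j k).trans (hsq _)
    by_cases hg : F.coeff 1 = 0
    · have hh : F.coeff 0 ≠ 0 := by
        intro hh
        refine hf ((finSuccEquiv K n).injective (?_ : F = 0))
        rw [Polynomial.eq_X_add_C_of_natDegree_le_one (p := F)
          (by rw [hF, natDegree_finSuccEquiv]; exact hsq 0), hg, hh, map_zero, zero_mul, zero_add]
      have hdegh : (F.coeff 0).totalDegree ≤ min d n := le_min
        (by simpa using (totalDegree_coeff_finSuccEquiv_add_le f 0 hh).trans hdeg)
        ((totalDegree_le_card_of_degreeOf_le_one (hsqF 0)).trans (Fintype.card_fin n).le)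
      calc (Fintype.card K - 2) ^ d * (Fintype.card K - 1) ^ (n + 1 - d)
          ≤ (Fintype.card K - 1) *
              ((Fintype.card K - 2) ^ min d n * (Fintype.card K - 1) ^ (n - min d n)) :=
            pow_mul_pow_sub_le_mul_pow_min_mul_pow_sub (by omega) hdn
        _ ≤ (Fintype.card K - 1) * #(torusNonzeros (F.coeff 0)) :=
            Nat.mul_le_mul_left _ (ih hh (hsqF 0) hdegh (min_le_right _ _))
        _ ≤ _ := sub_one_mul_card_torusNonzeros_coeff_zero_le (hsq 0) hg
    · have hdegg : (F.coeff 1).totalDegree + 1 ≤ d :=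
        (totalDegree_coeff_finSuccEquiv_add_le f 1 hg).trans hdeg
      obtain ⟨d, rfl⟩ : ∃ d', d = d' + 1 := ⟨d - 1, by omega⟩
      calc (Fintype.card K - 2) ^ (d + 1) * (Fintype.card K - 1) ^ (n + 1 - (d + 1))
          = (Fintype.card K - 2) * ((Fintype.card K - 2) ^ d * (Fintype.card K - 1) ^ (n - d)) := by
            rw [Nat.add_sub_add_right, pow_succ]
            ring
        _ ≤ _ := (Nat.mul_le_mul_left _ (ih hg (hsqF 1) (by omega) (by omega))).trans
            (sub_two_mul_card_torusNonzeros_coeff_one_le (hsq 0))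

end LowerBound

section ExtremalCount

lemma card_torusNonzeros_X_sub_X :
    #(torusNonzeros (X 0 - X 1 : MvPolynomial (Fin 2) K)) =
      (Fintype.card K - 1) * (Fintype.card K - 2) := by
  rw [card_torusNonzeros_finSucc]
  trans ∑ _Q ∈ (torusPoints : Finset (Fin 1 → K)), (Fintype.card K - 2)
  · refine sum_congr rfl fun Q hQ => ?_
    have hQ0 : Q 0 ≠ 0 := mem_torusPoints.mp hQ 0
    simp only [map_sub, eval_X, Fin.cons_zero, Fin.cons_one, sub_ne_zero]
    rw [card_filter_ne_and_ne, card_pair hQ0.symm]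
  · rw [sum_const, card_torusPoints, Fintype.card_fin, pow_one, smul_eq_mul]

lemma card_torusNonzeros_X_sub_one :
    #(torusNonzeros (X 0 - 1 : MvPolynomial (Fin 1) K)) = Fintype.card K - 2 := by
  rw [card_torusNonzeros_finSucc]
  simp only [map_sub, eval_X, Fin.cons_zero, map_one, sub_ne_zero]
  rw [card_filter_ne_and_ne, card_pair zero_ne_one]
  simp [card_torusPoints]

@[simp]
lemma card_torusNonzeros_blockPoly_inl {a b c : ℕ} (j : Fin a) :
    #(torusNonzeros (blockPoly K (.inl j : Fin a ⊕ Fin b ⊕ Fin c))) =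
      (Fintype.card K - 1) * (Fintype.card K - 2) :=
  card_torusNonzeros_X_sub_X

@[simp]
lemma card_torusNonzeros_blockPoly_inr_inl {a b c : ℕ} (j : Fin b) :
    #(torusNonzeros (blockPoly K (.inr (.inl j) : Fin a ⊕ Fin b ⊕ Fin c))) =
      Fintype.card K - 2 :=
  card_torusNonzeros_X_sub_one

@[simp]
lemma card_torusNonzeros_blockPoly_inr_inr {a b c : ℕ} (j : Fin c) :
    #(torusNonzeros (blockPoly K (.inr (.inr j) : Fin a ⊕ Fin b ⊕ Fin c))) =
      Fintype.card K - 1 := by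
  show #(torusNonzeros (1 : MvPolynomial (Fin 1) K)) = _
  rw [torusNonzeros_one, card_torusPoints, Fintype.card_fin, pow_one]

theorem exists_mem_edgeSpan_card_torusNonzeros_eq {s d₁ d₂ : ℕ} (hd : d₂ ≤ d₁)
    (hsum : d₁ + d₂ ≤ s) :
    ∃ f ∈ edgeSpan K (Set.univ : Set (Fin s)) d₂ d₁,
      #(torusNonzeros f) = (Fintype.card K - 2) ^ d₁ * (Fintype.card K - 1) ^ (s - d₁) := by
  obtain ⟨k, rfl⟩ := Nat.exists_eq_add_of_le hd
  obtain ⟨r, rfl⟩ := Nat.exists_eq_add_of_le hsum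
  have hcard :
      Fintype.card (Σ i : Fin d₂ ⊕ Fin k ⊕ Fin r, Fin (blockSize i)) = d₂ + k + d₂ + r := by
    simp only [Fintype.card_sigma, Fintype.card_fin]
    simp [Fintype.sum_sum_type, blockSize]
    omega
  let e := Fintype.equivFinOfCardEq hcard
  refine ⟨rename e (∏ i, rename (Sigma.mk i) (blockPoly K i)), ?_, ?_⟩
  · refine edgeSpan_mono (Set.subset_univ _) (by simp [Fintype.sum_sum_type])
      (by simp [Fintype.sum_sum_type])
      (rename_mem_edgeSpan e.injective
        (prod_rename_sigmaMk_mem_edgeSpan blockPoly_mem_edgeSpan univ))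
  · rw [card_torusNonzeros_rename_equiv, card_torusNonzeros_prod_rename_sigmaMk,
      Fintype.prod_sum_type, Fintype.prod_sum_type]
    simp only [card_torusNonzeros_blockPoly_inl, card_torusNonzeros_blockPoly_inr_inl,
      card_torusNonzeros_blockPoly_inr_inr, prod_const, card_univ, Fintype.card_fin]
    rw [show d₂ + k + d₂ + r - (d₂ + k) = d₂ + r by omega]
    ring

end ExtremalCount

end MvPolynomial

open MvPolynomial

section EdgeCode

variable {K : Type} [Field K] [Fintype K] [DecidableEq K] {s : ℕ}

lemma wt_evalTorus (f : MvPolynomial (Fin s) K) : wt (evalTorus s K f) = #(torusNonzeros f) := by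
  rw [wt, ← Set.ncard_coe_finset, ← Set.ncard_image_of_injective _ Subtype.val_injective]
  congr 1
  ext P
  simp [evalTorus, and_comm]

lemma pow_mul_pow_le_wt_evalTorus {V : Set (Fin s)} {a b : ℕ} (hb : b ≤ s)
    {f : MvPolynomial (Fin s) K} (hf : f ∈ edgeSpan K V a b) (hc : evalTorus s K f ≠ 0) :
    (Fintype.card K - 2) ^ b * (Fintype.card K - 1) ^ (s - b) ≤ wt (evalTorus s K f) := by
  obtain ⟨hsq, hdeg⟩ := edgeSpan_le_restrictDegree_inf_restrictTotalDegree V a b hf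
  rw [wt_evalTorus]
  exact pow_mul_pow_le_card_torusNonzeros (by rintro rfl; exact hc (map_zero _))
    (fun i => degreeOf_le_iff.mpr fun m hm => (mem_restrictDegree _ _ _).mp hsq m hm i)
    ((mem_restrictTotalDegree _ _ _).mp hdeg) hb

end EdgeCode

theorem minDist_edgeCode_all_edges_between_degrees_low_general
    (q s d₁ d₂ : ℕ) (hq : 3 ≤ q) (hd : d₂ ≤ d₁) (hsum : d₁ + d₂ ≤ s)
    (K : Type) [Field K] [Fintype K] (hK : Fintype.card K = q) :
    minDist (edgeCode s K
        {e : Finset (Fin s) | d₂ ≤ e.card ∧ e.card ≤ d₁})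
      = (q - 2) ^ d₁ * (q - 1) ^ (s - d₁) := by
  classical
  subst hK
  have hcode : edgeCode s K {e : Finset (Fin s) | d₂ ≤ e.card ∧ e.card ≤ d₁} =
      (edgeSpan K Set.univ d₂ d₁).map (evalTorus s K) := by
    simp [edgeCode, edgeSpan]
  obtain ⟨f, hf, hcard⟩ := exists_mem_edgeSpan_card_torusNonzeros_eq (K := K) hd hsum
  have hwt := (wt_evalTorus f).trans hcard
  have hne : evalTorus s K f ≠ 0 := by
    have hpos : 0 < (Fintype.card K - 2) ^ d₁ * (Fintype.card K - 1) ^ (s - d₁) :=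
      Nat.mul_pos (Nat.pow_pos (by omega)) (Nat.pow_pos (by omega))
    rintro h
    simp [h, wt] at hwt
    omega
  have hmem := Submodule.mem_map_of_mem (f := evalTorus s K) hf
  rw [hcode, minDist]
  refine le_antisymm (Nat.sInf_le ⟨_, hmem, hne, hwt⟩) (le_csInf ⟨_, _, hmem, hne, hwt⟩ ?_)
  rintro _ ⟨_, ⟨g, hg, rfl⟩, hg0, rfl⟩
  exact pow_mul_pow_le_wt_evalTorus (by omega) hg hg0

/-- for `q ≥ 3` and `1 ≤ d₂ ≤ d₁` with `d₁ + d₂ ≤ s`, the edge code of the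
hypergraph on `{1,…,s}` whose edges are all subsets `e` with `d₂ ≤ |e| ≤ d₁` has minimum
distance `(q-2)^{d₁} (q-1)^{s-d₁}`. -/
theorem minDist_edgeCode_all_edges_between_degrees_low
    (q s d₁ d₂ : ℕ) (hq : 3 ≤ q) (hd₂ : 1 ≤ d₂) (hd : d₂ ≤ d₁) (hsum : d₁ + d₂ ≤ s)
    (K : Type) [Field K] [Fintype K] (hK : Fintype.card K = q) :
    minDist (edgeCode s K
        {e : Finset (Fin s) | d₂ ≤ e.card ∧ e.card ≤ d₁})
      = (q - 2) ^ d₁ * (q - 1) ^ (s - d₁) :=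
  minDist_edgeCode_all_edges_between_degrees_low_general q s d₁ d₂ hq hd hsum K hK
end

section
/- Let q ≥ 4 and let H be a hypergraph on {1,…,s} all of whose edges are nonempty. Then the edge code C_H is self-orthogonal with respect to the standard bilinear form on K^T: for all codewords c = (c_P)_{P∈T} and c' = (c'_P)_{P∈T} in C_H, one has Σ_{P∈T} c_P c'_P = 0; equivalently C_H ⊆ C_H^⊥. -/
open MvPolynomial

/-- Equivalence between the torus and functions into the units. -/
noncomputable def torusEquiv (s : ℕ) (K : Type) [Field K] [DecidableEq K] :
    Torus s K ≃ (Fin s → Kˣ) where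
  toFun P i := Units.mk0 (P.1 i) (P.2 i)
  invFun u := ⟨fun i => (u i : K), fun i => (u i).ne_zero⟩
  left_inv P := by ext i; simp
  right_inv u := by ext i; simp

lemma gen_orth (q s : ℕ) (hq : 4 ≤ q) (K : Type) [Field K] [Fintype K] [DecidableEq K]
    (hK : Fintype.card K = q) (e e' : Finset (Fin s)) (he : e.Nonempty) :
    ∑ P : Torus s K, (∏ j ∈ e, P.1 j) * (∏ j ∈ e', P.1 j) = 0 := by
  classical
  set a : Fin s → ℕ := fun i => (if i ∈ e then 1 else 0) + (if i ∈ e' then 1 else 0) with ha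
  have key : ∀ P : Fin s → K, (∏ j ∈ e, P j) * (∏ j ∈ e', P j)
      = ∏ j : Fin s, (P j) ^ (a j) := by
    intro P
    simp only [ha, pow_add, pow_ite, pow_one, pow_zero, Finset.prod_mul_distrib,
      Finset.prod_ite_mem, Finset.univ_inter]
  have e1 : ∑ P : Torus s K, (∏ j ∈ e, P.1 j) * (∏ j ∈ e', P.1 j)
      = ∑ u : Fin s → Kˣ, ∏ j : Fin s, ((u j : K)) ^ (a j) := by
    rw [← Equiv.sum_comp (torusEquiv s K).symm]
    exact Finset.sum_congr rfl fun u _ => key _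
  rw [e1, ← Fintype.prod_sum fun (j : Fin s) (x : Kˣ) => ((x : K)) ^ a j]
  obtain ⟨i, hi⟩ := he
  apply Finset.prod_eq_zero (Finset.mem_univ i)
  have := FiniteField.sum_pow_units K (a i)
  rw [this, if_neg]
  intro hdvd
  have h1 : 1 ≤ a i := by simp [ha, hi]
  have h2 : a i ≤ 2 := by simp only [ha]; split_ifs <;> omega
  have := Nat.le_of_dvd (by omega) hdvd
  omega

/-- for `q ≥ 4`, the edge code of a hypergraph all of whose edges are
nonempty is self-orthogonal: any two codewords are orthogonal with respect to the
standard bilinear form on `K^T`, i.e. `C_H ⊆ C_H^⊥`. -/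
theorem edgeCode_self_orthogonal
    (q s : ℕ) (hq : 4 ≤ q) (K : Type) [Field K] [Fintype K] [DecidableEq K]
    (hK : Fintype.card K = q)
    (E : Set (Finset (Fin s))) (hE : ∀ e ∈ E, e.Nonempty) :
    ∀ c ∈ edgeCode s K E, ∀ c' ∈ edgeCode s K E,
      ∑ P : Torus s K, c P * c' P = 0 := by
  rintro c hc c' hc'
  obtain ⟨f, hf, rfl⟩ := hc
  obtain ⟨f', hf', rfl⟩ := hc'
  induction hf using Submodule.span_induction with
  | mem x hx =>
    induction hf' using Submodule.span_induction with
    | mem y hy =>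
      obtain ⟨e, heE, rfl⟩ := hx
      obtain ⟨e', he'E, rfl⟩ := hy
      have : ∀ P : Torus s K,
          evalTorus s K (∏ j ∈ e, X j) P = ∏ j ∈ e, P.1 j := by
        intro P; simp [evalTorus]
      have h' : ∀ P : Torus s K,
          evalTorus s K (∏ j ∈ e', X j) P = ∏ j ∈ e', P.1 j := by
        intro P; simp [evalTorus]
      simp only [this, h']
      exact gen_orth q s hq K hK e e' (hE e heE)
    | zero => simp
    | add y z _ _ hy hz => simp only [map_add, Pi.add_apply, mul_add,
        Finset.sum_add_distrib, hy, hz, add_zero]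
    | smul r y _ hy => simp only [map_smul, Pi.smul_apply, smul_eq_mul,
        mul_left_comm, ← Finset.mul_sum, hy, mul_zero]
  | zero => simp
  | add y z _ _ hy hz => simp only [map_add, Pi.add_apply, add_mul,
      Finset.sum_add_distrib, hy, hz, add_zero]
  | smul r y _ hy => simp only [map_smul, Pi.smul_apply, smul_eq_mul, mul_assoc,
      ← Finset.mul_sum, hy, mul_zero]
end

section
/- Let G be a connected tree on the vertex set {1,…,s} and let f be a nonzero element of KE(G), written uniquely as f = Σ_{e ∈ E(G)} c_e t_i t_j (where e = {i,j} ranges over the edges of G and c_e ∈ K). Let r ≥ 1 be the number of edges e with c_e ≠ 0. Then the number of zeros of f in the affine torus is |V_T(f)| = (q−1)^{s−1} − (q−1)^{s−2} + ⋯ + (−1)^r (q−1)^{s−(r−1)}, i.e. |V_T(f)| = Σ_{i=1}^{r−1} (−1)^{i−1} (q−1)^{s−i}. -/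
open MvPolynomial

/-- The squarefree monomial `t_i t_j` attached to an edge `{i,j}` of a simple graph. -/
noncomputable def edgeMonSym2 (s : ℕ) (K : Type) [Field K] (e : Sym2 (Fin s)) :
    MvPolynomial (Fin s) K :=
  Sym2.lift ⟨fun i j => X i * X j, fun _ _ => mul_comm _ _⟩ e

/-- The edge code of a simple graph on `{1,…,s}`. -/
noncomputable def graphCode (s : ℕ) (K : Type) [Field K] (G : SimpleGraph (Fin s)) :
    Submodule K (Torus s K → K) :=
  (Submodule.span K (edgeMonSym2 s K '' G.edgeSet)).map (evalTorus s K)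

/-!
Let `E` be the set of edges with nonzero coefficient; it spans a forest, so some vertex `v` lies on
exactly one edge `{v, x}` of `E`. Then `f = g + c t_v t_x` with `g` free of `t_v`. Fixing the
other coordinates of a torus point, the equation `g + c t_v t_x = 0` has exactly one solution
`t_v ∈ K*` when `g ≠ 0` and none when `g = 0`. Hence
`|V_T(f)| (q - 1) = (q - 1)^s - |V_T(g)|`, and induction on `|E|` (starting from
`|V_T(0)| = (q - 1)^s`) yields the alternating sum.
-/

open Finset Function

theorem sum_range_alternating_succ_mul_add {R : Type*} [CommRing R] (a : R) {s m : ℕ}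
    (h : m + 1 ≤ s) :
    (∑ i ∈ range (m + 1), (-1) ^ i * a ^ (s - (i + 1))) * a
      + ∑ i ∈ range m, (-1) ^ i * a ^ (s - (i + 1)) = a ^ s := by
  rw [sum_range_succ', add_mul, sum_mul, add_right_comm, ← sum_add_distrib]
  have hterm : ∀ i ∈ range m, (-1) ^ (i + 1) * a ^ (s - (i + 1 + 1)) * a
      + (-1) ^ i * a ^ (s - (i + 1)) = 0 := by
    intro i hi
    have : s - (i + 1) = s - (i + 1 + 1) + 1 := by have := mem_range.mp hi; omega
    rw [this, pow_succ, pow_succ]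
    ring
  rw [sum_eq_zero hterm, zero_add, pow_zero, one_mul, zero_add, ← pow_succ,
    Nat.sub_add_cancel (by omega)]

namespace SimpleGraph
variable {V : Type*} {G : SimpleGraph V}

theorem IsAcyclic.exists_adj_forall_adj_eq [Finite G.edgeSet] (hG : G.IsAcyclic) {a b : V}
    (hab : G.Adj a b) : ∃ u w, G.Adj u w ∧ ∀ w', G.Adj u w' → w' = w := by
  have : Nonempty V := ⟨a⟩
  obtain ⟨u, v, p, hp, hmax⟩ := Walk.exists_isPath_forall_isPath_length_le_length G
  have hnil : ¬p.Nil := fun h => by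
    simpa [h.length_eq_zero] using hmax a b _ (Path.singleton hab).2
  refine ⟨u, p.snd, p.adj_snd hnil, fun w hw => hG.eq_snd_of_adj_start hp hw ?_⟩
  by_contra hws
  simpa using hmax w v _ (hp.cons (h := hw.symm) hws)

theorem IsAcyclic.ncard_edgeSet_lt [Finite V] [Nonempty V] (hG : G.IsAcyclic) :
    G.edgeSet.ncard < Nat.card V := by
  classical
  have := Fintype.ofFinite V
  obtain ⟨T, hGT, hT⟩ := exists_maximal_isAcyclic_of_le_isAcyclic (le_top : G ≤ ⊤) hG
  have hTree : T.IsTree :=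
    maximal_isAcyclic_iff_isTree.mp ⟨hT.1.2, fun H hH hTH => hT.2 ⟨le_top, hH⟩ hTH⟩
  rw [Nat.card_eq_fintype_card, ← hTree.card_edgeFinset, Nat.lt_succ_iff,
    ← Set.ncard_coe_finset, coe_edgeFinset]
  exact Set.ncard_le_ncard (edgeSet_mono hGT)

theorem IsAcyclic.exists_leaf_edge [DecidableEq V] (hG : G.IsAcyclic) {E : Finset (Sym2 V)}
    (hEG : (E : Set (Sym2 V)) ⊆ G.edgeSet) (hE : E.Nonempty) :
    ∃ v x, v ≠ x ∧ s(v, x) ∈ E ∧ ∀ e ∈ E.erase s(v, x), v ∉ e := by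
  set H := fromEdgeSet (E : Set (Sym2 V))
  have hHG : H ≤ G := (fromEdgeSet_le G).mpr fun e he => hEG he.1
  have : Finite H.edgeSet := (E.finite_toSet.subset (by simp [H, edgeSet_fromEdgeSet])).to_subtype
  obtain ⟨⟨a, b⟩, he⟩ := hE
  obtain ⟨v, x, hvx, hleaf⟩ :=
    (hG.anti hHG).exists_adj_forall_adj_eq (show H.Adj a b from ⟨he, (hEG he).ne⟩)
  refine ⟨v, x, hvx.2, hvx.1, fun e he hve => ?_⟩
  obtain ⟨heq, heE⟩ := mem_erase.mp he
  obtain ⟨y, rfl⟩ := Sym2.mem_iff_exists.mp hve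
  exact heq (by rw [hleaf y ⟨heE, (hEG heE).ne⟩])

end SimpleGraph

section Torus
variable {ι K : Type*} [Fintype ι] [DecidableEq ι] [Zero K] [Fintype K] [DecidableEq K]

variable (ι K) in
def torusFinset : Finset (ι → K) := Fintype.piFinset fun _ => {0}ᶜ

@[simp] theorem mem_torusFinset {P : ι → K} : P ∈ torusFinset ι K ↔ ∀ i, P i ≠ 0 := by
  simp [torusFinset]

variable (ι K) in
theorem card_torusFinset : #(torusFinset ι K) = (Fintype.card K - 1) ^ Fintype.card ι := by
  simp [torusFinset, card_compl]

theorem update_mem_torusFinset {P : ι → K} (hP : P ∈ torusFinset ι K) (v : ι) {a : K}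
    (ha : a ≠ 0) : update P v a ∈ torusFinset ι K := by
  simp only [mem_torusFinset] at hP ⊢
  intro i
  rcases eq_or_ne i v with rfl | hi
  · simpa
  · simpa [hi] using hP i

end Torus

section TorusCount
variable {ι K : Type*} [Fintype ι] [DecidableEq ι] [Field K] [Fintype K] [DecidableEq K]

theorem card_filter_add_mul_eq_zero_mul (v : ι) (g u : (ι → K) → K)
    (hg : ∀ P a, g (update P v a) = g P) (hu : ∀ P a, u (update P v a) = u P)
    (hu0 : ∀ P ∈ torusFinset ι K, u P ≠ 0) :
    #((torusFinset ι K).filter fun P => g P + P v * u P = 0) * (Fintype.card K - 1)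
      = #((torusFinset ι K).filter fun P => g P ≠ 0) := by
  have hK : Fintype.card K - 1 = #({0}ᶜ : Finset K) := by simp [card_compl]
  rw [hK, ← card_product]
  symm
  refine card_nbij' (fun P => (update P v (-g P / u P), P v)) (fun Qb => update Qb.1 v Qb.2)
    ?_ ?_ ?_ ?_
  · intro P hP
    obtain ⟨hPT, hgP⟩ := mem_filter.mp hP
    have huP := hu0 P hPT
    refine mem_product.mpr ⟨mem_filter.mpr ⟨update_mem_torusFinset hPT v ?_, ?_⟩, ?_⟩
    · exact div_ne_zero (neg_ne_zero.mpr hgP) huP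
    · simp only [hg, hu, update_self]
      field_simp
      ring
    · simpa using (mem_torusFinset.mp hPT) v
  · rintro ⟨Q, b⟩ hQb
    obtain ⟨hQ, hb⟩ := mem_product.mp hQb
    obtain ⟨hQT, hfQ⟩ := mem_filter.mp hQ
    refine mem_filter.mpr ⟨update_mem_torusFinset hQT v (by simpa using hb), ?_⟩
    rw [hg, eq_neg_of_add_eq_zero_left hfQ]
    exact neg_ne_zero.mpr (mul_ne_zero ((mem_torusFinset.mp hQT) v) (hu0 Q hQT))
  · intro P _
    simp
  · rintro ⟨Q, b⟩ hQb
    obtain ⟨hQ, -⟩ := mem_product.mp hQb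
    obtain ⟨hQT, hfQ⟩ := mem_filter.mp hQ
    have hQv : -g Q / u Q = Q v := by
      rw [eq_neg_of_add_eq_zero_left hfQ, neg_neg, mul_div_cancel_right₀ _ (hu0 Q hQT)]
    simp [hg, hu, hQv]

theorem card_filter_mul_add_card_filter_eq_pow (v : ι) (g u : (ι → K) → K)
    (hg : ∀ P a, g (update P v a) = g P) (hu : ∀ P a, u (update P v a) = u P)
    (hu0 : ∀ P ∈ torusFinset ι K, u P ≠ 0) :
    (#((torusFinset ι K).filter fun P => g P + P v * u P = 0) : ℤ) * ((Fintype.card K : ℤ) - 1)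
      + #((torusFinset ι K).filter fun P => g P = 0)
      = ((Fintype.card K : ℤ) - 1) ^ Fintype.card ι := by
  have hsplit := card_filter_add_card_filter_not (s := torusFinset ι K) (g · = 0)
  rw [card_torusFinset, ← card_filter_add_mul_eq_zero_mul v g u hg hu hu0] at hsplit
  have : 1 ≤ Fintype.card K := Fintype.card_pos
  zify [this] at hsplit
  linarith

noncomputable def torusZeros (f : MvPolynomial ι K) : Finset (ι → K) :=
  (torusFinset ι K).filter fun P => eval P f = 0

end TorusCount

section EdgePolynomial
variable {s : ℕ} {K : Type} [Field K]

theorem eval_edgeMonSym2_mk (P : Fin s → K) (i j : Fin s) :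
    eval P (edgeMonSym2 s K s(i, j)) = P i * P j := by
  simp [edgeMonSym2]

theorem eval_update_edgeMonSym2 (P : Fin s → K) {v : Fin s} (a : K) {e : Sym2 (Fin s)}
    (hv : v ∉ e) : eval (update P v a) (edgeMonSym2 s K e) = eval P (edgeMonSym2 s K e) := by
  induction e using Sym2.inductionOn with
  | hf i j =>
    obtain ⟨hvi, hvj⟩ : v ≠ i ∧ v ≠ j := by simpa [not_or] using hv
    simp [eval_edgeMonSym2_mk, update_of_ne hvi.symm, update_of_ne hvj.symm]

variable (K) in
noncomputable def edgePolynomial (c : Sym2 (Fin s) → K) (E : Finset (Sym2 (Fin s))) :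
    MvPolynomial (Fin s) K :=
  ∑ e ∈ E, c e • edgeMonSym2 s K e

theorem eval_update_edgePolynomial (c : Sym2 (Fin s) → K) {E : Finset (Sym2 (Fin s))}
    (P : Fin s → K) {v : Fin s} (a : K) (hv : ∀ e ∈ E, v ∉ e) :
    eval (update P v a) (edgePolynomial K c E) = eval P (edgePolynomial K c E) := by
  simp only [edgePolynomial, map_sum, smul_eval]
  exact sum_congr rfl fun e he => by rw [eval_update_edgeMonSym2 P a (hv e he)]

theorem eval_edgePolynomial_of_mem (c : Sym2 (Fin s) → K) {E : Finset (Sym2 (Fin s))}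
    (P : Fin s → K) {v x : Fin s} (he : s(v, x) ∈ E) :
    eval P (edgePolynomial K c E)
      = eval P (edgePolynomial K c (E.erase s(v, x))) + P v * (c s(v, x) * P x) := by
  rw [edgePolynomial, ← add_sum_erase E _ he, map_add, smul_eval, eval_edgeMonSym2_mk,
    edgePolynomial]
  ring

end EdgePolynomial

section EdgePolynomialZeros
variable {s : ℕ} {K : Type} [Field K] [Fintype K] [DecidableEq K]

theorem card_torusZeros_edgePolynomial_mul_add (c : Sym2 (Fin s) → K)
    {E : Finset (Sym2 (Fin s))} {v x : Fin s} (hvx : v ≠ x) (he : s(v, x) ∈ E)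
    (hc : c s(v, x) ≠ 0) (hleaf : ∀ e ∈ E.erase s(v, x), v ∉ e) :
    (#(torusZeros (edgePolynomial K c E)) : ℤ) * ((Fintype.card K : ℤ) - 1)
      + #(torusZeros (edgePolynomial K c (E.erase s(v, x))))
      = ((Fintype.card K : ℤ) - 1) ^ s := by
  simp only [torusZeros, eval_edgePolynomial_of_mem c _ he]
  simpa using card_filter_mul_add_card_filter_eq_pow v
    (fun P => eval P (edgePolynomial K c (E.erase s(v, x)))) (fun P => c s(v, x) * P x)
    (fun P a => eval_update_edgePolynomial c P a hleaf)
    (fun P a => by rw [update_of_ne hvx.symm])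
    (fun P hP => mul_ne_zero hc (mem_torusFinset.mp hP x))

theorem card_torusZeros_edgePolynomial_of_isAcyclic {G : SimpleGraph (Fin s)} (hG : G.IsAcyclic)
    (c : Sym2 (Fin s) → K) {E : Finset (Sym2 (Fin s))}
    (hEG : (E : Set (Sym2 (Fin s))) ⊆ G.edgeSet) (hE : E.Nonempty) (hc : ∀ e ∈ E, c e ≠ 0) :
    (#(torusZeros (edgePolynomial K c E)) : ℤ)
      = ∑ i ∈ range (#E - 1), (-1) ^ i * ((Fintype.card K : ℤ) - 1) ^ (s - (i + 1)) := by
  induction E using Finset.strongInduction with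
  | H E ih =>
  obtain ⟨v, x, hvx, he, hleaf⟩ := hG.exists_leaf_edge hEG hE
  have hrec := card_torusZeros_edgePolynomial_mul_add c hvx he (hc _ he) hleaf
  have hq : (Fintype.card K : ℤ) - 1 ≠ 0 := by
    have : 1 < Fintype.card K := Fintype.one_lt_card
    omega
  refine mul_right_cancel₀ hq ?_
  rcases (E.erase s(v, x)).eq_empty_or_nonempty with hempty | hne
  · have hcard : #E = 1 := by rw [← card_erase_add_one he, hempty, card_empty]
    have hall : torusZeros (edgePolynomial K c (E.erase s(v, x))) = torusFinset (Fin s) K := by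
      simp [torusZeros, hempty, edgePolynomial]
    rw [hall, card_torusFinset, Fintype.card_fin] at hrec
    push_cast [Fintype.card_pos] at hrec
    simp only [hcard, Nat.sub_self, range_zero, sum_empty, zero_mul]
    linarith
  · have hcard : #(E.erase s(v, x)) = #E - 1 := card_erase_of_mem he
    have hlt : #E < s := by
      have : Nonempty (Fin s) := ⟨v⟩
      calc #E = (E : Set (Sym2 (Fin s))).ncard := (Set.ncard_coe_finset E).symm
        _ ≤ G.edgeSet.ncard := Set.ncard_le_ncard hEG
        _ < Nat.card (Fin s) := hG.ncard_edgeSet_lt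
        _ = s := Nat.card_eq_fintype_card.trans (Fintype.card_fin s)
    have hpos := hne.card_pos
    have hih := ih _ (erase_ssubset he) ((coe_subset.mpr (erase_subset _ _)).trans hEG) hne
      fun e he' => hc e (mem_of_mem_erase he')
    rw [hih, hcard] at hrec
    have halt := sum_range_alternating_succ_mul_add ((Fintype.card K : ℤ) - 1)
      (m := #E - 1 - 1) (s := s) (by omega)
    rw [show #E - 1 - 1 + 1 = #E - 1 by omega] at halt
    linear_combination hrec - halt

end EdgePolynomialZeros

theorem ncard_setOf_eval_eq_zero {s : ℕ} {K : Type} [Field K] [Fintype K] [DecidableEq K]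
    (f : MvPolynomial (Fin s) K) :
    {P : Torus s K | eval P.1 f = 0}.ncard = #(torusZeros f) := by
  rw [← Set.ncard_image_of_injective _ Subtype.val_injective, ← Set.ncard_coe_finset]
  congr
  ext P
  simp [torusZeros, and_comm]

theorem card_zeros_edgePolynomial_tree_general
    (q s : ℕ) (K : Type) [Field K] [Fintype K] [DecidableEq K]
    (hK : Fintype.card K = q)
    (G : SimpleGraph (Fin s)) [DecidableRel G.Adj] (hG : G.IsTree)
    (c : Sym2 (Fin s) → K) (f : MvPolynomial (Fin s) K)
    (hf : f = ∑ e ∈ G.edgeFinset, c e • edgeMonSym2 s K e)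
    (r : ℕ) (hr : r = (G.edgeFinset.filter fun e => c e ≠ 0).card) (hr1 : 1 ≤ r) :
    ({P : Torus s K | eval P.1 f = 0}.ncard : ℤ)
      = ∑ i ∈ Finset.range (r - 1), (-1) ^ i * ((q : ℤ) - 1) ^ (s - (i + 1)) := by
  set E := G.edgeFinset.filter fun e => c e ≠ 0
  have hfE : f = edgePolynomial K c E := by
    rw [hf, edgePolynomial]
    exact (sum_filter_of_ne (p := (c · ≠ 0)) fun e _ hce hc => hce (by rw [hc, zero_smul])).symm
  have hEG : (E : Set (Sym2 (Fin s))) ⊆ G.edgeSet := fun e he =>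
    SimpleGraph.mem_edgeFinset.mp (mem_filter.mp he).1
  rw [ncard_setOf_eval_eq_zero, hfE, hr, ← hK,
    card_torusZeros_edgePolynomial_of_isAcyclic hG.isAcyclic c hEG (card_pos.mp (hr ▸ hr1))
      fun e he => (mem_filter.mp he).2]

/-- let `G` be a connected tree on `{1,…,s}` and let
`f = Σ_{e ∈ E(G)} c_e t_i t_j` be a nonzero element of `KE(G)` with exactly `r ≥ 1`
nonzero coefficients. Then `|V_T(f)| = Σ_{i=1}^{r-1} (-1)^{i-1} (q-1)^{s-i}`. -/
theorem card_zeros_edgePolynomial_tree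
    (q s : ℕ) (K : Type) [Field K] [Fintype K] [DecidableEq K]
    (hK : Fintype.card K = q)
    (G : SimpleGraph (Fin s)) [DecidableRel G.Adj] (hG : G.IsTree)
    (c : Sym2 (Fin s) → K) (f : MvPolynomial (Fin s) K)
    (hf : f = ∑ e ∈ G.edgeFinset, c e • edgeMonSym2 s K e)
    (hf0 : f ≠ 0)
    (r : ℕ) (hr : r = (G.edgeFinset.filter fun e => c e ≠ 0).card) (hr1 : 1 ≤ r) :
    ({P : Torus s K | eval P.1 f = 0}.ncard : ℤ)
      = ∑ i ∈ Finset.range (r - 1), (-1) ^ i * ((q : ℤ) - 1) ^ (s - (i + 1)) :=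
  card_zeros_edgePolynomial_tree_general q s K hK G hG c f hf r hr hr1
end

section
/- Let q ≥ 3, let s = 4, and let P_4 be the path graph on vertices {1,2,3,4} with edges {1,2}, {2,3}, {3,4}. Then the minimum distance of the edge code of P_4 is δ(C_{P_4}) = (q−1)^4 − (q−1)^3 = (q−2)(q−1)^3. -/
open MvPolynomial

section aux

set_option linter.unusedSectionVars false

variable {K : Type} [Field K] [Fintype K]

/-- The evaluation on the torus of `a t₀t₁ + b t₁t₂ + c t₂t₃`. -/
def gfun (a b c : K) : Torus 4 K → K :=
  fun P => a * (P.1 0 * P.1 1) + b * (P.1 1 * P.1 2) + c * (P.1 2 * P.1 3)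

lemma card_ne_zero_aux : Nat.card {x : K // x ≠ 0} = Fintype.card K - 1 := by
  classical
  rw [← Nat.card_congr (unitsEquivNeZero (G₀ := K)), Nat.card_eq_fintype_card,
    Fintype.card_units]

lemma card_prod3_aux :
    Nat.card ({x : K // x ≠ 0} × {x : K // x ≠ 0} × {x : K // x ≠ 0})
      = (Fintype.card K - 1) ^ 3 := by
  simp [Nat.card_prod, card_ne_zero_aux]; ring

lemma card_torus_aux : Nat.card (Torus 4 K) = (Fintype.card K - 1) ^ 4 := by
  rw [Nat.card_congr (Equiv.subtypePiEquivPi (p := fun (_ : Fin 4) (x : K) => x ≠ 0)),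
    Nat.card_pi]
  simp [card_ne_zero_aux]

lemma wt_eq_aux (f : Torus 4 K → K) :
    wt f = Nat.card (Torus 4 K) - Nat.card {P : Torus 4 K // f P = 0} := by
  classical
  have h : wt f = Nat.card {P : Torus 4 K // ¬ f P = 0} := rfl
  rw [h, Nat.card_eq_fintype_card, Nat.card_eq_fintype_card, Nat.card_eq_fintype_card,
    Fintype.card_subtype_compl]

lemma zeros_le_aux (a b c : K) (h : a ≠ 0 ∨ b ≠ 0 ∨ c ≠ 0) :
    Nat.card {P : Torus 4 K // gfun a b c P = 0} ≤ (Fintype.card K - 1) ^ 3 := by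
  rw [← card_prod3_aux (K := K)]
  rcases ne_or_eq a 0 with ha | rfl
  · apply Nat.card_le_card_of_injective
      (f := fun P => (⟨P.1.1 1, P.1.2 1⟩, ⟨P.1.1 2, P.1.2 2⟩, ⟨P.1.1 3, P.1.2 3⟩))
    rintro ⟨⟨P, hP⟩, hP0⟩ ⟨⟨Q, hQ⟩, hQ0⟩ hPQ
    simp only [Prod.mk.injEq, Subtype.mk.injEq] at hPQ
    obtain ⟨h1, h2, h3⟩ := hPQ
    have h0 : P 0 = Q 0 := by
      have key : a * (P 0 * Q 1) = a * (Q 0 * Q 1) := by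
        simp only [gfun] at hP0 hQ0
        rw [h1, h2, h3] at hP0
        linear_combination hP0 - hQ0
      have := mul_left_cancel₀ ha key
      exact mul_right_cancel₀ (h1 ▸ hP 1) this
    refine Subtype.ext (Subtype.ext (funext fun i => ?_))
    fin_cases i <;> assumption
  · rcases ne_or_eq c 0 with hc | rfl
    · apply Nat.card_le_card_of_injective
        (f := fun P => (⟨P.1.1 0, P.1.2 0⟩, ⟨P.1.1 1, P.1.2 1⟩, ⟨P.1.1 2, P.1.2 2⟩))
      rintro ⟨⟨P, hP⟩, hP0⟩ ⟨⟨Q, hQ⟩, hQ0⟩ hPQ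
      simp only [Prod.mk.injEq, Subtype.mk.injEq] at hPQ
      obtain ⟨h1, h2, h3⟩ := hPQ
      have h0 : P 3 = Q 3 := by
        have key : c * (Q 2 * P 3) = c * (Q 2 * Q 3) := by
          simp only [gfun] at hP0 hQ0
          rw [h1, h2, h3] at hP0
          linear_combination hP0 - hQ0
        have := mul_left_cancel₀ hc key
        exact mul_left_cancel₀ (h3 ▸ hP 2) this
      refine Subtype.ext (Subtype.ext (funext fun i => ?_))
      fin_cases i <;> assumption
    · have hb : b ≠ 0 := by tauto
      have : IsEmpty {P : Torus 4 K // gfun 0 b 0 P = 0} := by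
        refine ⟨fun P => ?_⟩
        have := P.2
        simp only [gfun, zero_mul, zero_add, add_zero] at this
        exact (mul_ne_zero hb (mul_ne_zero (P.1.2 1) (P.1.2 2))) this
      simp [Nat.card_of_isEmpty]

/-- Bijection between the zeros of `t₀t₁ + t₂t₃` on the torus and `(K*)³`. -/
noncomputable def zeroEquivAux :
    {P : Torus 4 K // gfun 1 0 1 P = 0} ≃
      ({x : K // x ≠ 0} × {x : K // x ≠ 0} × {x : K // x ≠ 0}) where
  toFun P := (⟨P.1.1 1, P.1.2 1⟩, ⟨P.1.1 2, P.1.2 2⟩, ⟨P.1.1 3, P.1.2 3⟩)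
  invFun y :=
    ⟨⟨![-(y.2.1.1 * y.2.2.1) / y.1.1, y.1.1, y.2.1.1, y.2.2.1], by
        intro i
        fin_cases i
        · exact div_ne_zero (neg_ne_zero.2 (mul_ne_zero y.2.1.2 y.2.2.2)) y.1.2
        · exact y.1.2
        · exact y.2.1.2
        · exact y.2.2.2⟩, by
      simp only [gfun, Matrix.cons_val_zero, Matrix.cons_val_one, Matrix.head_cons,
        Matrix.cons_val_two, Matrix.tail_cons, Matrix.cons_val_three, one_mul, zero_mul,
        add_zero, zero_add]
      rw [div_mul_cancel₀ _ y.1.2, neg_add_cancel]⟩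
  left_inv := by
    rintro ⟨⟨P, hP⟩, hP0⟩
    simp only [gfun, one_mul, zero_mul, add_zero, zero_add] at hP0
    refine Subtype.ext (Subtype.ext (funext fun i => ?_))
    fin_cases i
    · show -(P 2 * P 3) / P 1 = P 0
      rw [div_eq_iff (hP 1)]
      linear_combination -hP0
    · rfl
    · rfl
    · rfl
  right_inv := by
    rintro ⟨y1, y2, y3⟩
    simp

lemma zeros_exact_aux :
    Nat.card {P : Torus 4 K // gfun 1 0 1 P = 0} = (Fintype.card K - 1) ^ 3 := by
  rw [Nat.card_congr (zeroEquivAux (K := K)), card_prod3_aux]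

lemma eval_eq_aux (a b c : K) :
    evalTorus 4 K (a • (X 0 * X 1) + (b • (X 1 * X 2) + c • (X 2 * X 3))) = gfun a b c := by
  funext P
  simp [evalTorus, gfun, smul_eq_mul]
  ring

end aux

/-- for `q ≥ 3`, the edge code of the path graph `P₄` on four vertices,
with edges `{1,2}, {2,3}, {3,4}`, has minimum distance
`(q-1)^4 - (q-1)^3 = (q-2)(q-1)^3`. -/
theorem minDist_edgeCode_path_four
    (q : ℕ) (hq : 3 ≤ q)
    (K : Type) [Field K] [Fintype K] (hK : Fintype.card K = q) :
    minDist (edgeCode 4 K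
        ({ {0, 1}, {1, 2}, {2, 3} } : Set (Finset (Fin 4))))
      = (q - 1) ^ 4 - (q - 1) ^ 3 ∧
    (q - 1) ^ 4 - (q - 1) ^ 3 = (q - 2) * (q - 1) ^ 3 := by
  have hq1 : 1 < q - 1 := by omega
  have hlt : (q - 1) ^ 3 < (q - 1) ^ 4 := Nat.pow_lt_pow_right hq1 (by omega)
  have hNpos : 0 < (q - 1) ^ 4 - (q - 1) ^ 3 := by omega
  have hT : Nat.card (Torus 4 K) = (q - 1) ^ 4 := by rw [card_torus_aux, hK]
  have hwt : ∀ a b c : K, wt (gfun a b c)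
      = (q - 1) ^ 4 - Nat.card {P : Torus 4 K // gfun a b c P = 0} := by
    intro a b c; rw [wt_eq_aux, hT]
  have himg : (fun e : Finset (Fin 4) => ∏ j ∈ e, X j) ''
      ({ {0, 1}, {1, 2}, {2, 3} } : Set (Finset (Fin 4)))
      = ({X 0 * X 1, X 1 * X 2, X 2 * X 3} : Set (MvPolynomial (Fin 4) K)) := by
    rw [Set.image_insert_eq, Set.image_insert_eq, Set.image_singleton]
    have p1 : ∏ j ∈ ({0, 1} : Finset (Fin 4)), (X j : MvPolynomial (Fin 4) K) = X 0 * X 1 :=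
      Finset.prod_pair (by decide)
    have p2 : ∏ j ∈ ({1, 2} : Finset (Fin 4)), (X j : MvPolynomial (Fin 4) K) = X 1 * X 2 :=
      Finset.prod_pair (by decide)
    have p3 : ∏ j ∈ ({2, 3} : Finset (Fin 4)), (X j : MvPolynomial (Fin 4) K) = X 2 * X 3 :=
      Finset.prod_pair (by decide)
    rw [p1, p2, p3]
  constructor
  · -- the codeword t₀t₁ + t₂t₃ has weight exactly (q-1)^4 - (q-1)^3
    have hc0 : gfun (1 : K) 0 1 ∈ edgeCode 4 K
        ({ {0, 1}, {1, 2}, {2, 3} } : Set (Finset (Fin 4))) := by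
      rw [edgeCode, himg]
      have hmem : (1 : K) • (X 0 * X 1) + ((0 : K) • (X 1 * X 2) + (1 : K) • (X 2 * X 3)) ∈
          Submodule.span K ({X 0 * X 1, X 1 * X 2, X 2 * X 3} : Set (MvPolynomial (Fin 4) K)) :=
        add_mem (Submodule.smul_mem _ _ (Submodule.subset_span (by simp)))
          (add_mem (Submodule.smul_mem _ _ (Submodule.subset_span (by simp)))
            (Submodule.smul_mem _ _ (Submodule.subset_span (by simp))))
      exact (eval_eq_aux (K := K) 1 0 1) ▸ Submodule.mem_map_of_mem hmem
    have hwt0 : wt (gfun (1 : K) 0 1) = (q - 1) ^ 4 - (q - 1) ^ 3 := by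
      rw [hwt, zeros_exact_aux, hK]
    have hne0 : gfun (1 : K) 0 1 ≠ 0 := by
      intro h0
      have : wt (gfun (1 : K) 0 1) = 0 := by rw [h0]; simp [wt]
      omega
    have hNmem : (q - 1) ^ 4 - (q - 1) ^ 3 ∈
        {w : ℕ | ∃ c ∈ edgeCode 4 K
          ({ {0, 1}, {1, 2}, {2, 3} } : Set (Finset (Fin 4))), c ≠ 0 ∧ wt c = w} :=
      ⟨gfun 1 0 1, hc0, hne0, hwt0⟩
    refine le_antisymm (Nat.sInf_le hNmem) (le_csInf ⟨_, hNmem⟩ ?_)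
    rintro w ⟨cw, hcw, hnz, rfl⟩
    rw [edgeCode] at hcw
    obtain ⟨f, hf, rfl⟩ := hcw
    rw [himg] at hf
    rw [SetLike.mem_coe, Submodule.mem_span_insert] at hf
    obtain ⟨a, z, hz, rfl⟩ := hf
    rw [Submodule.mem_span_insert] at hz
    obtain ⟨b, z', hz', rfl⟩ := hz
    rw [Submodule.mem_span_singleton] at hz'
    obtain ⟨c, rfl⟩ := hz'
    rw [eval_eq_aux] at hnz ⊢
    have habc : a ≠ 0 ∨ b ≠ 0 ∨ c ≠ 0 := by
      by_contra hcon
      push_neg at hcon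
      obtain ⟨rfl, rfl, rfl⟩ := hcon
      exact hnz (funext fun P => by simp [gfun])
    rw [hwt]
    have := zeros_le_aux a b c habc
    rw [hK] at this
    omega
  · -- arithmetic identity
    have hle : (q - 1) ^ 3 ≤ (q - 1) ^ 4 := le_of_lt hlt
    rw [Nat.sub_eq_iff_eq_add hle]
    obtain ⟨k, rfl⟩ : ∃ k, q = k + 3 := ⟨q - 3, by omega⟩
    have e1 : k + 3 - 1 = k + 2 := by omega
    have e2 : k + 3 - 2 = k + 1 := by omega
    rw [e1, e2]
    ring
end
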